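/- arXiv:1003.1012 — 11 statements merged into one kernel-verified Lean document; each statement's English description precedes it below -/
import Mathlib

section
/- Let G be the group with presentation ⟨Θ, Ψ | Θ²Ψ = ΨΘ², (ΘΨ)³ = Θ⁴⟩. Then the assignment Θ ↦ [[0,1],[-1,0]], Ψ ↦ [[1,1],[0,1]] extends to a surjective group homomorphism π : G → SL₂(ℤ), the kernel of π is the subgroup generated by Θ⁴, and this kernel is infinite cyclic. -/
/-- Generators of the group `G = ⟨Θ, Ψ | Θ²Ψ = ΨΘ², (ΘΨ)³ = Θ⁴⟩`. -/
inductive GTilde.Gen | theta | psi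
  deriving DecidableEq

namespace GTilde

open FreeGroup

/-- The relations of `G`: `Θ²Ψ(Θ²)⁻¹Ψ⁻¹` and `(ΘΨ)³(Θ⁴)⁻¹`. -/
def rels : Set (FreeGroup Gen) :=
  { (of Gen.theta) ^ 2 * of Gen.psi * ((of Gen.theta) ^ 2)⁻¹ * (of Gen.psi)⁻¹,
    (of Gen.theta * of Gen.psi) ^ 3 * ((of Gen.theta) ^ 4)⁻¹ }

/-- The group `G = ⟨Θ, Ψ | Θ²Ψ = ΨΘ², (ΘΨ)³ = Θ⁴⟩`. -/
abbrev G := PresentedGroup rels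

/-- The generator `Θ` of `G`. -/
def Θ : G := PresentedGroup.of Gen.theta

/-- The generator `Ψ` of `G`. -/
def Ψ : G := PresentedGroup.of Gen.psi

end GTilde

open GTilde

/-- The matrix `[[0,1],[-1,0]]` in `SL₂(ℤ)`. -/
noncomputable def Amat : Matrix.SpecialLinearGroup (Fin 2) ℤ :=
  ⟨!![0, 1; -1, 0], by simp [Matrix.det_fin_two_of]⟩

/-- The matrix `[[1,1],[0,1]]` in `SL₂(ℤ)`. -/
noncomputable def Bmat : Matrix.SpecialLinearGroup (Fin 2) ℤ :=
  ⟨!![1, 1; 0, 1], by simp [Matrix.det_fin_two_of]⟩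

/-!
The relations hold for `A = [[0,1],[-1,0]]` and `B = [[1,1],[0,1]]`, and `A = S⁻¹`, `B = T`
generate `SL₂(ℤ)`, so `π` exists and is onto. `Θ²` is central and `π(Θ²) = -1`. Modulo `Θ²` the
presentation becomes `⟨Θ, ΘΨ | Θ², (ΘΨ)³⟩`, so `G ⧸ ⟨Θ²⟩` is a quotient of `ℤ/2 ∗ ℤ/3`. That free
product acts faithfully on the upper half-plane through `A` and `AB` by ping-pong on the half-planes
`Re z > 0` and `Re z < 0`. Hence `ker π ≤ ⟨Θ²⟩`, and `(-1)^m = 1` forces `m` even, i.e.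
`ker π = ⟨Θ⁴⟩`.
Finally `Θ ↦ 3, Ψ ↦ 1` defines a homomorphism `G → ℤ`, so `Θ⁴` has infinite order.
-/

open ModularGroup (S T)
open scoped MatrixGroups

section CyclicHom

variable {Γ : Type*} [Group Γ]

noncomputable def cyclicHom (n : ℕ) (g : Γ) (hg : g ^ n = 1) : Multiplicative (ZMod n) →* Γ :=
  AddMonoidHom.toMultiplicativeLeft <| ZMod.lift n ⟨zmultiplesHom _ (Additive.ofMul g), by
    rw [zmultiplesHom_apply, ← ofMul_zpow, zpow_natCast, hg, ofMul_one]⟩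

theorem cyclicHom_ofAdd_intCast (n : ℕ) (g : Γ) (hg : g ^ n = 1) (k : ℤ) :
    cyclicHom n g hg (.ofAdd k) = g ^ k := by
  simp [cyclicHom, ← ofMul_zpow]

@[simp]
theorem cyclicHom_ofAdd_one (n : ℕ) (g : Γ) (hg : g ^ n = 1) :
    cyclicHom n g hg (.ofAdd 1) = g := by
  simpa using cyclicHom_ofAdd_intCast n g hg 1

end CyclicHom

namespace ModularGroup

open UpperHalfPlane

theorem re_S_smul (z : ℍ) : (S • z).re = -z.re / Complex.normSq z := by
  rw [modular_S_smul, mk_re, Complex.inv_re, Complex.normSq_neg, Complex.neg_re, coe_re]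

theorem re_S_smul_neg {z : ℍ} (hz : 0 < z.re) : (S • z).re < 0 := by
  rw [re_S_smul]
  exact div_neg_of_neg_of_pos (neg_neg_of_pos hz) (Complex.normSq_pos.2 z.ne_zero)

theorem re_S_smul_pos {z : ℍ} (hz : z.re < 0) : 0 < (S • z).re := by
  rw [re_S_smul]
  exact div_pos (neg_pos.2 hz) (Complex.normSq_pos.2 z.ne_zero)

end ModularGroup

namespace GTilde

open FreeGroup (of)
open Monoid Pointwise Subgroup UpperHalfPlane

theorem theta_sq_mul_psi : Θ ^ 2 * Ψ = Ψ * Θ ^ 2 :=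
  PresentedGroup.mk_eq_mk_of_mul_inv_mem (rels := rels) (x := of .theta ^ 2 * of .psi)
    (y := of .psi * of .theta ^ 2) (by simp [rels, mul_assoc])

theorem theta_mul_psi_pow_three : (Θ * Ψ) ^ 3 = Θ ^ 4 :=
  PresentedGroup.mk_eq_mk_of_mul_inv_mem (rels := rels) (x := (of .theta * of .psi) ^ 3)
    (y := of .theta ^ 4) (by simp [rels])

theorem commute_theta_sq (g : G) : Commute (Θ ^ 2) g := by
  induction g using PresentedGroup.induction_on with
  | H w =>
    induction w using FreeGroup.induction_on with
    | C1 => exact Commute.one_right _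
    | of x =>
      cases x
      · exact (Commute.refl Θ).pow_left 2
      · exact theta_sq_mul_psi
    | inv_of x h => simpa using h.inv_right
    | mul x y hx hy => simpa using hx.mul_right hy

instance : (zpowers (Θ ^ 2)).Normal where
  conj_mem n hn g := by
    obtain ⟨k, rfl⟩ := mem_zpowers_iff.1 hn
    rwa [((commute_theta_sq g).zpow_left k).symm.eq, mul_inv_cancel_right]

noncomputable def toSL : G →* SL(2, ℤ) :=
  PresentedGroup.toGroup (f := fun g => Gen.casesOn g Amat Bmat) <| by
    rintro r (rfl | rfl) <;> simp <;> decide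

@[simp] theorem toSL_theta : toSL Θ = Amat := PresentedGroup.toGroup.of _

@[simp] theorem toSL_psi : toSL Ψ = Bmat := PresentedGroup.toGroup.of _

theorem toSL_surjective : Function.Surjective toSL := by
  rw [← MonoidHom.range_eq_top, eq_top_iff, ← SpecialLinearGroup.SL2Z_generators,
    Subgroup.closure_le, Set.insert_subset_iff, Set.singleton_subset_iff]
  exact ⟨⟨Θ⁻¹, by simp; decide⟩, ⟨Ψ, by simp; decide⟩⟩

def degree : G →* Multiplicative ℤ :=
  PresentedGroup.toGroup (f := fun g => Gen.casesOn g (.ofAdd 3) (.ofAdd 1)) <| by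
    rintro r (rfl | rfl)
    · simp
    · simp; decide

theorem eq_zero_of_theta_pow_four_zpow_eq_one {n : ℤ} (h : (Θ ^ 4) ^ n = 1) : n = 0 := by
  simpa [degree, Θ] using congrArg (Multiplicative.toAdd ∘ degree) h

theorem re_Amat_smul_pos {z : ℍ} (hz : z.re < 0) : 0 < (Amat • z).re := by
  rw [show Amat = -S by decide, ModularGroup.SL_neg_smul]
  exact ModularGroup.re_S_smul_pos hz

theorem re_Amat_mul_Bmat_smul_neg {z : ℍ} (hz : 0 < z.re) : ((Amat * Bmat) • z).re < 0 := by
  rw [show Amat * Bmat = -(S * T) by decide, ModularGroup.SL_neg_smul, mul_smul]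
  exact ModularGroup.re_S_smul_neg (by rw [modular_T_smul, vadd_re]; linarith)

theorem re_Amat_mul_Bmat_sq_smul_neg {z : ℍ} (hz : 0 < z.re) :
    ((Amat * Bmat) ^ 2 • z).re < 0 := by
  rw [show (Amat * Bmat) ^ 2 = T ^ (-1 : ℤ) * S by decide, mul_smul, modular_T_zpow_smul, vadd_re]
  have := ModularGroup.re_S_smul_neg hz
  push_cast
  linarith

/-- `ℤ/2 ∗ ℤ/3 = CoprodI CyclicFactor`; its generators `a₂`, `a₃` below correspond to `Θ`, `ΘΨ`. -/
abbrev CyclicFactor (b : Bool) : Type := Multiplicative (ZMod (cond b 2 3))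

def a₂ : CoprodI CyclicFactor := CoprodI.of (i := true) (.ofAdd 1)

def a₃ : CoprodI CyclicFactor := CoprodI.of (i := false) (.ofAdd 1)

theorem a₂_sq : a₂ ^ 2 = 1 := by rw [a₂, ← map_pow]; exact map_one _

theorem a₃_pow_three : a₃ ^ 3 = 1 := by rw [a₃, ← map_pow]; exact map_one _

noncomputable def toCoprodI : G →* CoprodI CyclicFactor :=
  PresentedGroup.toGroup (f := fun g => Gen.casesOn g a₂ (a₂⁻¹ * a₃)) <| by
    rintro r (rfl | rfl)
    · simp [a₂_sq]
    · simp [a₃_pow_three, show a₂ ^ 4 = (a₂ ^ 2) ^ 2 by rw [← pow_mul], a₂_sq]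

@[simp] theorem toCoprodI_theta : toCoprodI Θ = a₂ := PresentedGroup.toGroup.of _

@[simp] theorem toCoprodI_psi : toCoprodI Ψ = a₂⁻¹ * a₃ := PresentedGroup.toGroup.of _

theorem mk_theta_sq : (Θ : G ⧸ zpowers (Θ ^ 2)) ^ 2 = 1 := by
  rw [← QuotientGroup.mk_pow, QuotientGroup.eq_one_iff]
  exact mem_zpowers _

theorem mk_theta_mul_psi_pow_three : ((Θ * Ψ : G) : G ⧸ zpowers (Θ ^ 2)) ^ 3 = 1 := by
  rw [← QuotientGroup.mk_pow, QuotientGroup.eq_one_iff, theta_mul_psi_pow_three,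
    show Θ ^ 4 = (Θ ^ 2) ^ 2 by rw [← pow_mul]]
  exact pow_mem (mem_zpowers _) 2

noncomputable def ofCoprodI : CoprodI CyclicFactor →* G ⧸ zpowers (Θ ^ 2) :=
  CoprodI.lift fun
    | true => cyclicHom 2 _ mk_theta_sq
    | false => cyclicHom 3 _ mk_theta_mul_psi_pow_three

@[simp] theorem ofCoprodI_a₂ : ofCoprodI a₂ = Θ := by simp [ofCoprodI, a₂]

@[simp] theorem ofCoprodI_a₃ : ofCoprodI a₃ = ((Θ * Ψ : G) : G ⧸ zpowers (Θ ^ 2)) := by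
  simp [ofCoprodI, a₃]

theorem ofCoprodI_comp_toCoprodI : ofCoprodI.comp toCoprodI = QuotientGroup.mk' _ := by
  apply PresentedGroup.ext
  rintro (_ | _)
  · exact ofCoprodI_a₂
  · change ofCoprodI (toCoprodI Ψ) = Ψ
    rw [toCoprodI_psi, map_mul, map_inv, ofCoprodI_a₂, ofCoprodI_a₃, QuotientGroup.mk_mul,
      inv_mul_cancel_left]

theorem toPerm_Amat_sq : MulAction.toPermHom SL(2, ℤ) ℍ Amat ^ 2 = 1 := by
  rw [← map_pow, show Amat ^ 2 = -1 by decide]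
  exact Equiv.ext fun z => (ModularGroup.SL_neg_smul 1 z).trans (one_smul _ z)

theorem toPerm_Amat_mul_Bmat_pow_three :
    MulAction.toPermHom SL(2, ℤ) ℍ (Amat * Bmat) ^ 3 = 1 := by
  rw [← map_pow, show (Amat * Bmat) ^ 3 = 1 by decide, map_one]

noncomputable def moebius : ∀ b, CyclicFactor b →* Equiv.Perm ℍ
  | true => cyclicHom 2 _ toPerm_Amat_sq
  | false => cyclicHom 3 _ toPerm_Amat_mul_Bmat_pow_three

theorem lift_moebius_comp_toCoprodI :
    (CoprodI.lift moebius).comp toCoprodI = (MulAction.toPermHom SL(2, ℤ) ℍ).comp toSL := by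
  apply PresentedGroup.ext
  rintro (_ | _)
  · change CoprodI.lift moebius a₂ = MulAction.toPermHom _ _ (toSL Θ)
    simp [a₂, moebius]
  · change CoprodI.lift moebius (a₂⁻¹ * a₃) = MulAction.toPermHom _ _ (toSL Ψ)
    rw [toSL_psi, show Bmat = Amat⁻¹ * (Amat * Bmat) by group, map_mul, map_mul, map_inv, map_inv]
    simp [a₂, a₃, moebius]

def halfPlane (b : Bool) : Set ℍ := cond b {z | 0 < z.re} {z | z.re < 0}

theorem moebius_true_smul_subset {h : CyclicFactor true} (hh : h ≠ 1) :
    moebius true h • halfPlane false ⊆ halfPlane true := by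
  obtain rfl : h = .ofAdd 1 :=
    (by decide : ∀ h : Multiplicative (ZMod 2), h ≠ 1 → h = .ofAdd 1) h hh
  rintro _ ⟨z, hz, rfl⟩
  exact re_Amat_smul_pos hz

theorem moebius_false_smul_subset {h : CyclicFactor false} (hh : h ≠ 1) :
    moebius false h • halfPlane true ⊆ halfPlane false := by
  obtain rfl | rfl : h = .ofAdd 1 ∨ h = .ofAdd 2 :=
    (by decide : ∀ h : Multiplicative (ZMod 3), h ≠ 1 → h = .ofAdd 1 ∨ h = .ofAdd 2) h hh
  all_goals rintro _ ⟨z, hz, rfl⟩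
  · exact re_Amat_mul_Bmat_smul_neg hz
  · have : moebius false (.ofAdd 2) = MulAction.toPermHom SL(2, ℤ) ℍ ((Amat * Bmat) ^ 2) := by
      rw [map_pow]
      exact_mod_cast cyclicHom_ofAdd_intCast 3 _ toPerm_Amat_mul_Bmat_pow_three 2
    rw [this]
    exact re_Amat_mul_Bmat_sq_smul_neg hz

theorem lift_moebius_injective : Function.Injective (CoprodI.lift moebius) := by
  refine CoprodI.lift_injective_of_ping_pong moebius (.inr ⟨false, by simp⟩) halfPlane ?_ ?_ ?_
  · rintro (_ | _)
    · exact ⟨(-1 : ℝ) +ᵥ I, by simp [halfPlane]⟩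
    · exact ⟨(1 : ℝ) +ᵥ I, by simp [halfPlane]⟩
  · exact pairwise_disjoint_on_bool.2 (Set.disjoint_left.2 fun z (h₁ : 0 < z.re) h₂ => h₁.not_gt h₂)
  · rintro (_ | _) (_ | _) hij h hh <;> simp only [ne_eq, not_true_eq_false] at hij
    · exact moebius_false_smul_subset hh
    · exact moebius_true_smul_subset hh

theorem ker_toSL_le_zpowers_theta_sq : toSL.ker ≤ zpowers (Θ ^ 2) := by
  intro g hg
  have h : toCoprodI g = 1 := lift_moebius_injective <| by
    rw [map_one, ← MonoidHom.comp_apply, lift_moebius_comp_toCoprodI, MonoidHom.comp_apply,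
      hg, map_one]
  rw [← QuotientGroup.eq_one_iff, ← QuotientGroup.mk'_apply, ← ofCoprodI_comp_toCoprodI,
    MonoidHom.comp_apply, h, map_one]

theorem ker_toSL : toSL.ker = zpowers (Θ ^ 4) := by
  refine le_antisymm (fun g hg => ?_) ?_
  · obtain ⟨m, rfl⟩ := mem_zpowers_iff.1 (ker_toSL_le_zpowers_theta_sq hg)
    have h : (-1 : SL(2, ℤ)) ^ m = 1 := by
      rwa [MonoidHom.mem_ker, map_zpow, map_pow, toSL_theta, show Amat ^ 2 = -1 by decide] at hg
    obtain ⟨k, rfl⟩ : (2 : ℤ) ∣ m := by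
      rwa [← orderOf_dvd_iff_zpow_eq_one,
        orderOf_eq_prime (p := 2) (by decide) (by decide)] at h
    exact ⟨k, show (Θ ^ 4) ^ k = (Θ ^ 2) ^ (2 * k) by rw [zpow_mul, zpow_ofNat, ← pow_mul]⟩
  · rw [zpowers_le, MonoidHom.mem_ker, map_pow, toSL_theta]
    decide

end GTilde

/-- `Θ ↦ [[0,1],[-1,0]]`, `Ψ ↦ [[1,1],[0,1]]` extends to a surjective homomorphism
`π : G → SL₂(ℤ)` whose kernel is the subgroup generated by `Θ⁴`, and this kernel
is infinite cyclic (i.e. `Θ⁴` has infinite order). -/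
theorem stmt0 :
    ∃ π : G →* Matrix.SpecialLinearGroup (Fin 2) ℤ,
      π Θ = Amat ∧ π Ψ = Bmat ∧ Function.Surjective π ∧
      π.ker = Subgroup.zpowers (Θ ^ 4) ∧
      ∀ n : ℤ, (Θ ^ 4) ^ n = 1 → n = 0 :=
  ⟨toSL, toSL_theta, toSL_psi, toSL_surjective, ker_toSL,
    fun _ => eq_zero_of_theta_pow_four_zpow_eq_one⟩
end

section
/- The braid group B₃ = ⟨σ₁, σ₂ | σ₁σ₂σ₁ = σ₂σ₁σ₂⟩ is isomorphic to the group G = ⟨Θ, Ψ | Θ²Ψ = ΨΘ², (ΘΨ)³ = Θ⁴⟩ via the map sending σ₁ ↦ Ψ and σ₂ ↦ ΘΨΘ⁻¹. -/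
/-- Generators of the braid group `B₃`. -/
inductive Braid3.Gen | s1 | s2
  deriving DecidableEq

namespace Braid3

open FreeGroup

/-- The braid relation `σ₁σ₂σ₁ = σ₂σ₁σ₂`. -/
def rels : Set (FreeGroup Gen) :=
  { of Gen.s1 * of Gen.s2 * of Gen.s1 * (of Gen.s2 * of Gen.s1 * of Gen.s2)⁻¹ }

/-- The braid group `B₃ = ⟨σ₁, σ₂ | σ₁σ₂σ₁ = σ₂σ₁σ₂⟩`. -/
abbrev B3 := PresentedGroup rels

/-- The generator `σ₁` of `B₃`. -/
def σ₁ : B3 := PresentedGroup.of Gen.s1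

/-- The generator `σ₂` of `B₃`. -/
def σ₂ : B3 := PresentedGroup.of Gen.s2

end Braid3

open GTilde Braid3

/-- Relators are trivial in a presented group. -/
lemma relator_eq_one {α : Type*} (rels : Set (FreeGroup α)) {r : FreeGroup α} (h : r ∈ rels) :
    PresentedGroup.mk rels r = 1 :=
  (QuotientGroup.eq_one_iff _).2 (Subgroup.subset_normalClosure h)

lemma GTilde.relc : Θ ^ 2 * Ψ = Ψ * Θ ^ 2 := by
  have h := relator_eq_one GTilde.rels (r := (FreeGroup.of Gen.theta) ^ 2 * FreeGroup.of Gen.psi *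
      ((FreeGroup.of Gen.theta) ^ 2)⁻¹ * (FreeGroup.of Gen.psi)⁻¹)
    (by left; rfl)
  simp only [map_mul, map_pow, map_inv] at h
  have h' : Θ ^ 2 * Ψ * (Θ ^ 2)⁻¹ * Ψ⁻¹ = 1 := h
  rw [mul_inv_eq_one, mul_inv_eq_iff_eq_mul] at h'
  exact h'

lemma GTilde.relp : (Θ * Ψ) ^ 3 = Θ ^ 4 := by
  have h := relator_eq_one GTilde.rels (r := (FreeGroup.of Gen.theta * FreeGroup.of Gen.psi) ^ 3 *
      ((FreeGroup.of Gen.theta) ^ 4)⁻¹)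
    (by right; rfl)
  simp only [map_mul, map_pow, map_inv] at h
  have h' : (Θ * Ψ) ^ 3 * (Θ ^ 4)⁻¹ = 1 := h
  rwa [mul_inv_eq_one] at h'

lemma GTilde.theta_sq_comm : ∀ g : G, Commute g (Θ ^ 2) := by
  intro g
  have htop := PresentedGroup.closure_range_of GTilde.rels
  have hg : g ∈ Subgroup.closure (Set.range (PresentedGroup.of : Gen → G)) := by
    rw [htop]; trivial
  induction hg using Subgroup.closure_induction with
  | mem x hx =>
    obtain ⟨a, rfl⟩ := hx
    cases a with
    | theta => exact (Commute.refl Θ).pow_right 2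
    | psi => exact Commute.symm relc
  | one => exact Commute.one_left _
  | mul _ _ _ _ h1 h2 => exact h1.mul_left h2
  | inv _ _ h1 => exact h1.inv_left

lemma GTilde.hz (g : G) : g * (Θ * Θ)⁻¹ = (Θ * Θ)⁻¹ * g := by
  have h := (theta_sq_comm g).inv_right.eq
  rwa [pow_two] at h

lemma GTilde.h5 : Ψ * Θ * Ψ * Θ * Ψ = Θ * Θ * Θ := by
  have h := relp
  simp only [pow_succ, pow_zero, one_mul, mul_assoc] at h
  apply mul_left_cancel (a := Θ)
  simp only [mul_assoc]
  exact h

lemma GTilde.key1 : Ψ * (Θ * Ψ * Θ⁻¹) * Ψ = Θ := by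
  calc Ψ * (Θ * Ψ * Θ⁻¹) * Ψ
      = Ψ * Θ * Ψ * ((Θ * Θ)⁻¹ * (Θ * Ψ)) := by group
    _ = Ψ * Θ * Ψ * ((Θ * Ψ) * (Θ * Θ)⁻¹) := by rw [← hz (Θ * Ψ)]
    _ = (Ψ * Θ * Ψ * Θ * Ψ) * (Θ * Θ)⁻¹ := by group
    _ = (Θ * Θ * Θ) * (Θ * Θ)⁻¹ := by rw [h5]
    _ = Θ := by group

lemma GTilde.key2 : (Θ * Ψ * Θ⁻¹) * Ψ * (Θ * Ψ * Θ⁻¹) = Θ := by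
  calc (Θ * Ψ * Θ⁻¹) * Ψ * (Θ * Ψ * Θ⁻¹)
      = Θ * Ψ * ((Θ * Θ)⁻¹ * (Θ * Ψ * Θ * Ψ * Θ⁻¹)) := by group
    _ = Θ * Ψ * ((Θ * Ψ * Θ * Ψ * Θ⁻¹) * (Θ * Θ)⁻¹) := by rw [← hz (Θ * Ψ * Θ * Ψ * Θ⁻¹)]
    _ = Θ * (Ψ * Θ * Ψ * Θ * Ψ) * (Θ⁻¹ * (Θ * Θ)⁻¹) := by group
    _ = Θ * (Θ * Θ * Θ) * (Θ⁻¹ * (Θ * Θ)⁻¹) := by rw [h5]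
    _ = Θ := by group

lemma Braid3.braid : σ₁ * σ₂ * σ₁ = σ₂ * σ₁ * σ₂ := by
  have h := relator_eq_one Braid3.rels (r := FreeGroup.of Gen.s1 * FreeGroup.of Gen.s2 *
      FreeGroup.of Gen.s1 * (FreeGroup.of Gen.s2 * FreeGroup.of Gen.s1 * FreeGroup.of Gen.s2)⁻¹)
    rfl
  simp only [map_mul, map_inv] at h
  have h' : σ₁ * σ₂ * σ₁ * (σ₂ * σ₁ * σ₂)⁻¹ = 1 := h
  rwa [mul_inv_eq_one] at h'

namespace Braid3

/-- `Δ = σ₁σ₂σ₁`, the half twist. -/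
noncomputable def Δ : B3 := σ₁ * σ₂ * σ₁

lemma hA : Δ * σ₁ = σ₂ * Δ := by
  calc Δ * σ₁ = (σ₁ * σ₂ * σ₁) * σ₁ := rfl
    _ = (σ₂ * σ₁ * σ₂) * σ₁ := by rw [braid]
    _ = σ₂ * (σ₁ * σ₂ * σ₁) := by group
    _ = σ₂ * Δ := rfl

lemma hB : Δ * σ₂ = σ₁ * Δ := by
  calc Δ * σ₂ = σ₁ * (σ₂ * σ₁ * σ₂) := by rw [Δ]; group
    _ = σ₁ * (σ₁ * σ₂ * σ₁) := by rw [braid]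
    _ = σ₁ * Δ := rfl

lemma hc1 : Δ * Δ * σ₁ = σ₁ * (Δ * Δ) := by
  calc Δ * Δ * σ₁ = Δ * (Δ * σ₁) := by group
    _ = Δ * (σ₂ * Δ) := by rw [hA]
    _ = (Δ * σ₂) * Δ := by group
    _ = (σ₁ * Δ) * Δ := by rw [hB]
    _ = σ₁ * (Δ * Δ) := by group

lemma hp : Δ * (σ₁ * (Δ * (σ₁ * (Δ * σ₁)))) = Δ * (Δ * (Δ * Δ)) := by
  calc Δ * (σ₁ * (Δ * (σ₁ * (Δ * σ₁))))
      = (Δ * σ₁) * ((Δ * σ₁) * (Δ * σ₁)) := by group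
    _ = (σ₂ * Δ) * ((σ₂ * Δ) * (σ₂ * Δ)) := by rw [hA]
    _ = σ₂ * (Δ * σ₂) * Δ * σ₂ * Δ := by group
    _ = σ₂ * (σ₁ * Δ) * Δ * σ₂ * Δ := by rw [hB]
    _ = σ₂ * σ₁ * Δ * (Δ * σ₂) * Δ := by group
    _ = σ₂ * σ₁ * Δ * (σ₁ * Δ) * Δ := by rw [hB]
    _ = σ₂ * σ₁ * (Δ * σ₁) * (Δ * Δ) := by group
    _ = σ₂ * σ₁ * (σ₂ * Δ) * (Δ * Δ) := by rw [hA]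
    _ = (σ₂ * σ₁ * σ₂) * (Δ * (Δ * Δ)) := by group
    _ = (σ₁ * σ₂ * σ₁) * (Δ * (Δ * Δ)) := by rw [braid]
    _ = Δ * (Δ * (Δ * Δ)) := by rw [Δ]

end Braid3

/-- The map on generators defining `φ : B₃ → G`. -/
noncomputable def fphi : Braid3.Gen → G
  | .s1 => Ψ
  | .s2 => Θ * Ψ * Θ⁻¹

lemma fphi_rels : ∀ r ∈ Braid3.rels, FreeGroup.lift fphi r = 1 := by
  intro r hr
  rcases hr with rfl
  simp only [map_mul, map_inv, FreeGroup.lift_apply_of, fphi]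
  rw [mul_inv_eq_one]
  calc Ψ * (Θ * Ψ * Θ⁻¹) * Ψ = Θ := GTilde.key1
    _ = (Θ * Ψ * Θ⁻¹) * Ψ * (Θ * Ψ * Θ⁻¹) := GTilde.key2.symm

/-- The homomorphism `φ : B₃ → G`. -/
noncomputable def phi : B3 →* G := PresentedGroup.toGroup fphi_rels

/-- The map on generators defining `ψ : G → B₃`. -/
noncomputable def fpsi : GTilde.Gen → B3
  | .theta => Δ
  | .psi => σ₁

lemma fpsi_rels : ∀ r ∈ GTilde.rels, FreeGroup.lift fpsi r = 1 := by
  intro r hr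
  rcases hr with rfl | rfl
  · simp only [map_mul, map_inv, map_pow, FreeGroup.lift_apply_of, fpsi]
    rw [pow_two, mul_inv_eq_one, mul_inv_eq_iff_eq_mul]
    exact hc1
  · simp only [map_mul, map_inv, map_pow, FreeGroup.lift_apply_of, fpsi]
    rw [mul_inv_eq_one]
    simp only [pow_succ, pow_zero, one_mul, mul_assoc]
    exact hp

/-- The homomorphism `ψ : G → B₃`. -/
noncomputable def psih : G →* B3 := PresentedGroup.toGroup fpsi_rels

lemma phi_s1 : phi σ₁ = Ψ := PresentedGroup.toGroup.of fphi_rels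
lemma phi_s2 : phi σ₂ = Θ * Ψ * Θ⁻¹ := PresentedGroup.toGroup.of fphi_rels
lemma psih_theta : psih Θ = Δ := PresentedGroup.toGroup.of fpsi_rels
lemma psih_psi : psih Ψ = σ₁ := PresentedGroup.toGroup.of fpsi_rels

lemma psih_phi : psih.comp phi = MonoidHom.id B3 := by
  apply PresentedGroup.ext
  intro x
  cases x with
  | s1 =>
    show psih (phi σ₁) = σ₁
    rw [phi_s1, psih_psi]
  | s2 =>
    show psih (phi σ₂) = σ₂
    rw [phi_s2, map_mul, map_mul, map_inv, psih_theta, psih_psi]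
    rw [hA]; group

lemma phi_psih : phi.comp psih = MonoidHom.id G := by
  apply PresentedGroup.ext
  intro x
  cases x with
  | theta =>
    show phi (psih Θ) = Θ
    rw [psih_theta]
    show phi (σ₁ * σ₂ * σ₁) = Θ
    rw [map_mul, map_mul, phi_s1, phi_s2]
    exact GTilde.key1
  | psi =>
    show phi (psih Ψ) = Ψ
    rw [psih_psi, phi_s1]

/-- The braid group `B₃` is isomorphic to `G = ⟨Θ, Ψ | Θ²Ψ = ΨΘ², (ΘΨ)³ = Θ⁴⟩`
via `σ₁ ↦ Ψ`, `σ₂ ↦ ΘΨΘ⁻¹`. -/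
theorem stmt2 :
    ∃ φ : B3 →* G, Function.Bijective φ ∧ φ σ₁ = Ψ ∧ φ σ₂ = Θ * Ψ * Θ⁻¹ := by
  have hl : Function.LeftInverse psih phi := fun x => by
    have h := DFunLike.congr_fun psih_phi x
    simpa using h
  have hr : Function.RightInverse psih phi := fun x => by
    have h := DFunLike.congr_fun phi_psih x
    simpa using h
  exact ⟨phi, ⟨hl.injective, hr.surjective⟩, phi_s1, phi_s2⟩
end

section
/- Let F₂ be the free group on generators X, Y, and let Θ be the automorphism of F₂ determined by X ↦ Y⁻¹, Y ↦ YXY⁻¹. Then Θ fixes the commutator (X,Y) = XYX⁻¹Y⁻¹, and Θ⁴ is the inner automorphism x ↦ (X,Y)⁻¹ x (X,Y). -/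
namespace Stmt4

/-- The free group on two generators `X, Y`. -/
abbrev F₂ := FreeGroup Bool

/-- The generator `X`. -/
def X : F₂ := FreeGroup.of true

/-- The generator `Y`. -/
def Y : F₂ := FreeGroup.of false

/-- The endomorphism `Θ` of `F₂` with `X ↦ Y⁻¹`, `Y ↦ YXY⁻¹`. -/
def θ : F₂ →* F₂ := FreeGroup.lift (fun b => if b then Y⁻¹ else Y * X * Y⁻¹)

/-- The candidate inverse endomorphism: `X ↦ X⁻¹Y⁻¹X`, `Y ↦ X⁻¹`. -/
def φ : F₂ →* F₂ := FreeGroup.lift (fun b => if b then X * Y * X⁻¹ else X⁻¹)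

lemma θX : θ X = Y⁻¹ := by simp [θ, X]
lemma θY : θ Y = Y * X * Y⁻¹ := by simp [θ, Y]
lemma φX : φ X = X * Y * X⁻¹ := by simp [φ, X]
lemma φY : φ Y = X⁻¹ := by simp [φ, Y]

lemma φθ : ∀ w : F₂, φ (θ w) = w := by
  intro w
  have h : φ.comp θ = MonoidHom.id F₂ := by
    apply FreeGroup.ext_hom
    intro b
    cases b <;>
      simp [θ, φ, X, Y] <;> group
  exact DFunLike.congr_fun h w

lemma θφ : ∀ w : F₂, θ (φ w) = w := by
  intro w
  have h : θ.comp φ = MonoidHom.id F₂ := by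
    apply FreeGroup.ext_hom
    intro b
    cases b <;>
      simp [θ, φ, X, Y] <;> group
  exact DFunLike.congr_fun h w

/-- The endomorphism `X ↦ Y⁻¹`, `Y ↦ YXY⁻¹` of the free group on `X, Y` is an
automorphism which fixes the commutator `(X,Y) = XYX⁻¹Y⁻¹`, and whose fourth power
is the inner automorphism `w ↦ (X,Y)⁻¹ w (X,Y)`. -/
theorem stmt4 :
    Function.Bijective θ ∧
    θ (X * Y * X⁻¹ * Y⁻¹) = X * Y * X⁻¹ * Y⁻¹ ∧
    ∀ w : F₂, θ (θ (θ (θ w))) =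
      (X * Y * X⁻¹ * Y⁻¹)⁻¹ * w * (X * Y * X⁻¹ * Y⁻¹) := by
  refine ⟨Function.bijective_iff_has_inverse.2 ⟨φ, φθ, θφ⟩, ?_, ?_⟩
  · simp only [map_mul, map_inv, θX, θY]
    group
  · intro w
    have h : ((θ.comp θ).comp (θ.comp θ)) =
        ((MulAut.conj ((X * Y * X⁻¹ * Y⁻¹)⁻¹) : F₂ ≃* F₂) : F₂ →* F₂) := by
      apply FreeGroup.ext_hom
      intro b
      cases b <;>
        simp [θ, X, Y, MulAut.conj_apply] <;> group
    have := DFunLike.congr_fun h w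
    simpa [MulAut.conj_apply, mul_assoc] using this
  
end Stmt4
end

section
/- Let F₂ be the free group on X, Y and let Aut₍X,Y₎(F₂) = {θ ∈ Aut(F₂) | θ((X,Y)) = (X,Y)} be the group of automorphisms fixing the commutator (X,Y) = XYX⁻¹Y⁻¹. If θ ∈ Aut₍X,Y₎(F₂) is an inner automorphism, then θ is a power of the inner automorphism x ↦ (X,Y)x(X,Y)⁻¹. -/
/-!
If `θ = (w ↦ k w k⁻¹)` fixes `c`, then `k` commutes with `c`. Two commuting elements of a free
group generate a subgroup that is free (Nielsen–Schreier) and abelian, hence cyclic, so `k` and `c`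
are powers of a common `z`. Mapping `F₂` onto the integer Heisenberg group sends `c` to the central
generator, which is not a proper power there; hence `c = z ^ (±1)` and `k` is a power of `c`.
-/

namespace Stmt6

/-- The free group on two generators `X, Y`. -/
abbrev F₂ := FreeGroup Bool

/-- The generator `X`. -/
def X : F₂ := FreeGroup.of true

/-- The generator `Y`. -/
def Y : F₂ := FreeGroup.of false

/-- The commutator `c = (X,Y) = XYX⁻¹Y⁻¹`. -/
def c : F₂ := X * Y * X⁻¹ * Y⁻¹

end Stmt6

/-- The integer Heisenberg group `{[[1,a,c],[0,1,b],[0,0,1]]}`, with `(a,b,c)` as coordinates. -/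
@[ext]
structure Heis where
  a : ℤ
  b : ℤ
  c : ℤ

namespace Heis

instance : Mul Heis := ⟨fun x y => ⟨x.a + y.a, x.b + y.b, x.c + y.c + x.a * y.b⟩⟩
instance : One Heis := ⟨⟨0, 0, 0⟩⟩
instance : Inv Heis := ⟨fun x => ⟨-x.a, -x.b, x.a * x.b - x.c⟩⟩

lemma mul_def (x y : Heis) : x * y = ⟨x.a + y.a, x.b + y.b, x.c + y.c + x.a * y.b⟩ := rfl

lemma inv_def (x : Heis) : x⁻¹ = ⟨-x.a, -x.b, x.a * x.b - x.c⟩ := rfl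

lemma one_def : (1 : Heis) = ⟨0, 0, 0⟩ := rfl

instance : Group Heis where
  mul_assoc x y z := by ext <;> simp only [mul_def] <;> ring
  one_mul x := by ext <;> simp [mul_def, one_def]
  mul_one x := by ext <;> simp [mul_def, one_def]
  inv_mul_cancel x := by ext <;> simp only [mul_def, inv_def, one_def] <;> ring

def abelianization : Heis →* Multiplicative (ℤ × ℤ) where
  toFun x := Multiplicative.ofAdd (x.a, x.b)
  map_one' := rfl
  map_mul' _ _ := rfl

def ofCentral : Multiplicative ℤ →* Heis where
  toFun n := ⟨0, 0, n.toAdd⟩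
  map_one' := rfl
  map_mul' x y := by ext <;> simp [mul_def]

lemma eq_ofCentral_of_abelianization_eq_one {x : Heis} (hx : abelianization x = 1) :
    x = ofCentral (Multiplicative.ofAdd x.c) := by
  obtain ⟨ha, hb⟩ := Prod.ext_iff.mp (Multiplicative.ofAdd.injective hx)
  ext <;> simp_all [ofCentral]

lemma eq_one_or_eq_neg_one_of_zpow_eq {x : Heis} {m : ℤ} (h : x ^ m = ⟨0, 0, 1⟩) :
    m = 1 ∨ m = -1 := by
  have hm : m ≠ 0 := by
    rintro rfl
    simp [one_def] at h
  have hx : abelianization x = 1 := by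
    have := congrArg (fun y => (abelianization y).toAdd) h
    simp only [map_zpow, toAdd_zpow] at this
    exact Multiplicative.toAdd.injective ((smul_eq_zero.mp this).resolve_left hm)
  rw [eq_ofCentral_of_abelianization_eq_one hx, ← map_zpow, ← ofAdd_zsmul] at h
  exact Int.eq_one_or_neg_one_of_mul_eq_one (congrArg Heis.c h)

lemma not_commute_generators : ¬Commute (⟨1, 0, 0⟩ : Heis) ⟨0, 1, 0⟩ := by
  simp [Commute, SemiconjBy, mul_def]

end Heis

lemma FreeGroup.subsingleton_of_isMulCommutative {ι : Type*} [IsMulCommutative (FreeGroup ι)] :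
    Subsingleton ι := by
  classical
  refine ⟨fun i j => by_contra fun hij => Heis.not_commute_generators ?_⟩
  let f : FreeGroup ι →* Heis := FreeGroup.lift fun t => if t = i then ⟨1, 0, 0⟩ else ⟨0, 1, 0⟩
  show _ * _ = _ * _
  simpa [f, Ne.symm hij] using congrArg f (mul_comm' (of i) (of j))

instance IsFreeGroup.isCyclic_of_isMulCommutative {G : Type*} [Group G] [IsFreeGroup G]
    [IsMulCommutative G] : IsCyclic G := by
  obtain ⟨ι, ⟨b⟩⟩ := IsFreeGroup.nonempty_basis (G := G)
  have : IsMulCommutative (FreeGroup ι) := isMulCommutative_iff.mpr fun u v =>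
    b.repr.symm.injective (by simp only [map_mul, mul_comm'])
  have := FreeGroup.subsingleton_of_isMulCommutative (ι := ι)
  cases isEmpty_or_nonempty ι
  · have : Subsingleton G := b.repr.toEquiv.subsingleton
    infer_instance
  · have := uniqueOfSubsingleton (Classical.arbitrary ι)
    exact isCyclic_of_surjective b.repr.symm b.repr.symm.surjective

lemma IsFreeGroup.exists_mem_zpowers_of_commute {G : Type*} [Group G] [IsFreeGroup G] {g h : G}
    (hgh : Commute g h) : ∃ z : G, g ∈ Subgroup.zpowers z ∧ h ∈ Subgroup.zpowers z := by
  have := Subgroup.isMulCommutative_closure (k := {g, h}) <| by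
    rintro x (rfl | rfl) y (rfl | rfl) <;> first | rfl | exact hgh | exact hgh.symm
  obtain ⟨z, hz⟩ := (Subgroup.isCyclic_iff_exists_zpowers_eq_top _).mp
    (inferInstance : IsCyclic (Subgroup.closure {g, h}))
  refine ⟨z, ?_⟩
  rw [hz]
  exact ⟨Subgroup.subset_closure (by simp), Subgroup.subset_closure (by simp)⟩

namespace Stmt6

def toHeis : F₂ →* Heis := FreeGroup.lift fun b => if b then ⟨1, 0, 0⟩ else ⟨0, 1, 0⟩

lemma toHeis_c : toHeis c = ⟨0, 0, 1⟩ := by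
  simp [toHeis, c, X, Y, Heis.mul_def, Heis.inv_def]

lemma eq_one_or_eq_neg_one_of_zpow_eq_c {z : F₂} {m : ℤ} (h : z ^ m = c) : m = 1 ∨ m = -1 :=
  Heis.eq_one_or_eq_neg_one_of_zpow_eq (by rw [← map_zpow toHeis, h, toHeis_c])

lemma centralizer_c_eq_zpowers : Subgroup.centralizer {c} = Subgroup.zpowers c := by
  refine le_antisymm (fun k hk => ?_) ?_
  · obtain ⟨z, hkz, ⟨m, hm⟩⟩ := IsFreeGroup.exists_mem_zpowers_of_commute
      (Subgroup.mem_centralizer_singleton_iff.mp hk)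
    have hz : Subgroup.zpowers z = Subgroup.zpowers c := by
      obtain rfl | rfl := eq_one_or_eq_neg_one_of_zpow_eq_c hm <;> simp [← hm]
    exact hz ▸ hkz
  · exact Subgroup.zpowers_le.mpr (Subgroup.mem_centralizer_singleton_iff.mpr rfl)

/-- If an automorphism `θ` of the free group on `X, Y` fixes the commutator
`c = XYX⁻¹Y⁻¹` and is inner, then `θ` is a power of the inner automorphism
`w ↦ c w c⁻¹`. -/
theorem stmt6 (θ : F₂ ≃* F₂) (hc : θ c = c) (hinner : ∃ k : F₂, ∀ w, θ w = k * w * k⁻¹) :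
    ∃ n : ℤ, ∀ w : F₂, θ w = c ^ n * w * (c ^ n)⁻¹ := by
  obtain ⟨k, hθ⟩ := hinner
  have hk : k ∈ Subgroup.centralizer {c} := by
    rw [Subgroup.mem_centralizer_singleton_iff, ← mul_inv_eq_iff_eq_mul, ← hθ, hc]
  obtain ⟨n, rfl⟩ := Subgroup.mem_zpowers_iff.mp (centralizer_c_eq_zpowers ▸ hk)
  exact ⟨n, hθ⟩

end Stmt6
end

section
/- The map θ ↦ (θ(X), θ(Y)) is a bijection from the group Aut₍X,Y₎(F₂) = {θ ∈ Aut(F₂) | θ((X,Y)) = (X,Y)} onto the set {(g₊, g₋) ∈ F₂² | (g₋, g₊) = (Y, X)}, where (a,b) := aba⁻¹b⁻¹. -/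
namespace Stmt7

open scoped commutatorElement

/-- The free group on two generators `X, Y`. -/
abbrev F₂ := FreeGroup Bool

/-- The generator `X`. -/
def X : F₂ := FreeGroup.of true

/-- The generator `Y`. -/
def Y : F₂ := FreeGroup.of false

/-- The map `θ ↦ (θ(X), θ(Y))` on automorphisms fixing the commutator `⁅X,Y⁆`. -/
def toPair (θ : {θ : F₂ ≃* F₂ // θ.1 ⁅X, Y⁆ = ⁅X, Y⁆}) : F₂ × F₂ :=
  (θ.1 X, θ.1 Y)

/-!
By Nielsen's method: the six moves `(a, b) ↦ (ab, b), (ab, a⁻¹), (a, ba), (b⁻¹, ba), (a, ba⁻¹),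
(ab⁻¹, b)` preserve the commutator `⁅a, b⁆` and are induced by automorphisms of `F₂`, so it suffices
to treat pairs that no move shortens. For such a pair the cancellation between `a` and `b`, `b` and
`a⁻¹`, `a⁻¹` and `b⁻¹` is at most half of each factor and never swallows a whole factor, so the
reduced word of `⁅a, b⁆` keeps a nonempty piece of each of the four factors. If `⁅a, b⁆ = ⁅X, Y⁆`,
which has length 4, these pieces are single letters, which forces `|a| = |b| = 1` and then
`(a, b) = (X, Y)`.
-/

open FreeGroup

section Words

variable {α : Type*}

theorem not_isReduced_invRev_append {r : List (α × Bool)} (hr : r ≠ []) :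
    ¬ IsReduced (invRev r ++ r) := by
  obtain ⟨z, r, rfl⟩ := List.exists_cons_of_ne_nil hr
  intro h
  have hinf : [(z.1, !z.2), z] <:+: invRev (z :: r) ++ z :: r := ⟨invRev r, r, by simp [invRev]⟩
  simpa using (h.infix hinf)

/-- `htr` holds when `t` and `r` are both suffixes of one word. If `m` were empty, `t = r` and
`B = t⁻¹ t` would not be reduced. -/
theorem exists_middle_ne_nil {B F B₁ t r : List (α × Bool)} (hB : IsReduced B) (hB₀ : B ≠ [])
    (h₁ : B = invRev t ++ B₁) (h₂ : B = F ++ r) (ht : 2 * t.length ≤ B.length)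
    (hr : 2 * r.length ≤ B.length) (htr : t.length = r.length → t = r) :
    ∃ m ≠ [], B₁ = m ++ r ∧ F = invRev t ++ m := by
  obtain ⟨m, hB₁, hF⟩ : ∃ m, B₁ = m ++ r ∧ F = invRev t ++ m := by
    rcases List.append_eq_append_iff.1 (h₁.symm.trans h₂) with ⟨m, hF, hB₁⟩ | ⟨c, ht', hr'⟩
    · exact ⟨m, hB₁, hF⟩
    · have := congrArg List.length h₁
      have := congrArg List.length h₂
      have := congrArg List.length ht'
      have := congrArg List.length hr'
      simp only [List.length_append, invRev_length] at *
      obtain rfl : c = [] := List.eq_nil_of_length_eq_zero (by omega)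
      exact ⟨[], by simpa using hr'.symm, by simpa using ht'.symm⟩
  refine ⟨m, ?_, hB₁, hF⟩
  rintro rfl
  rw [List.nil_append] at hB₁
  subst hB₁
  have hl := congrArg List.length h₁
  simp only [List.length_append, invRev_length] at hl
  obtain rfl : t = B₁ := htr (by omega)
  exact not_isReduced_invRev_append (by rintro rfl; simp_all) (h₁ ▸ hB)

variable [DecidableEq α]

theorem isReduced_reduce (L : List (α × Bool)) : IsReduced (reduce L) :=
  IsReduced.of_reduce_eq reduce.idem

theorem exists_reduce_append_eq {U V : List (α × Bool)} (hU : IsReduced U) (hV : IsReduced V) :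
    ∃ p d q, U = p ++ d ∧ V = invRev d ++ q ∧ reduce (U ++ V) = p ++ q := by
  induction U with
  | nil => exact ⟨[], [], V, rfl, rfl, hV.reduce_eq⟩
  | cons u U ih =>
    obtain ⟨p, d, q, rfl, rfl, hred⟩ := ih hU.tail
    have hpq : IsReduced (p ++ q) := hred ▸ isReduced_reduce _
    rw [List.cons_append, ← reduce_cons_reduce, hred]
    rcases p with _ | ⟨p₀, p⟩
    · rcases q with _ | ⟨q₀, q⟩
      · exact ⟨[u], d, [], rfl, by simp, rfl⟩
      · rw [List.nil_append] at hpq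
        by_cases hc : u.1 = q₀.1 ∧ u.2 = !q₀.2
        · refine ⟨[], u :: d, q, rfl, ?_, by simp [hpq.reduce_eq, hc]⟩
          obtain ⟨u₁, u₂⟩ := u
          obtain ⟨q₁, q₂⟩ := q₀
          simp_all [invRev]
        · exact ⟨[u], d, q₀ :: q, rfl, rfl, by simp [hpq.reduce_eq, hc]⟩
    · refine ⟨u :: p₀ :: p, d, q, rfl, rfl, ?_⟩
      have hup : IsReduced (u :: p₀ :: p ++ q) :=
        isReduced_cons_cons.2 ⟨(isReduced_cons_cons.1 hU).1, hpq⟩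
      rw [← reduce_cons_reduce, hpq.reduce_eq, ← List.cons_append, hup.reduce_eq]

theorem exists_toWord_mul (x y : FreeGroup α) :
    ∃ p d q, x.toWord = p ++ d ∧ y.toWord = invRev d ++ q ∧ (x * y).toWord = p ++ q := by
  rw [toWord_mul]
  exact exists_reduce_append_eq isReduced_toWord isReduced_toWord

theorem toWord_mul_of_isReduced {x y : FreeGroup α} {p m₁ c m₂ q : List (α × Bool)}
    (hx : x.toWord = p ++ m₁ ++ c) (hy : y.toWord = invRev c ++ m₂ ++ q)
    (hm : IsReduced (m₁ ++ m₂)) (hm₁ : m₁ ≠ []) (hm₂ : m₂ ≠ []) :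
    (x * y).toWord = p ++ m₁ ++ m₂ ++ q := by
  have hpm : IsReduced (p ++ m₁) := (hx ▸ isReduced_toWord).infix ⟨[], c, by simp⟩
  have hmq : IsReduced (m₂ ++ q) := (hy ▸ isReduced_toWord).infix ⟨invRev c, [], by simp⟩
  have hxy : x * y = mk (p ++ m₁ ++ m₂ ++ q) := by
    rw [← mk_toWord (x := x), ← mk_toWord (x := y), hx, hy]
    simp only [← mul_mk, ← inv_mk]
    group
  rw [hxy, toWord_mk, ((hpm.append_overlap hm hm₁).append_overlap hmq hm₂).reduce_eq]

theorem two_mul_length_le_of_toWord_mul {x y : FreeGroup α} {p d q : List (α × Bool)}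
    (hx : x.toWord = p ++ d) (hy : y.toWord = invRev d ++ q) (hxy : (x * y).toWord = p ++ q)
    (h₁ : norm x ≤ norm (x * y)) (h₂ : norm y ≤ norm (x * y)) :
    2 * d.length ≤ norm x ∧ 2 * d.length ≤ norm y := by
  simp only [FreeGroup.norm, hx, hy, hxy, List.length_append, invRev_length] at *
  omega

/-- None of the six commutator-preserving Nielsen moves `(a, b) ↦ (ab, b), (ab, a⁻¹), (a, ba),
(b⁻¹, ba), (a, ba⁻¹), (ab⁻¹, b)` shortens the entry it replaces. -/
def IsMinimalPair (a b : FreeGroup α) : Prop :=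
  norm a ≤ norm (a * b) ∧ norm b ≤ norm (a * b) ∧ norm a ≤ norm (b * a) ∧
    norm b ≤ norm (b * a) ∧ norm a ≤ norm (b * a⁻¹) ∧ norm b ≤ norm (b * a⁻¹)

theorem IsMinimalPair.exists_toWord_commutator {a b : FreeGroup α} (h : IsMinimalPair a b)
    (ha : a ≠ 1) (hb : b ≠ 1) :
    ∃ a₁ t m₁ r m₂ s b₂ : List (α × Bool),
      a.toWord = a₁ ++ t ∧ b.toWord = invRev t ++ m₁ ++ r ∧
      b.toWord = b₂ ++ s ∧ a⁻¹.toWord = invRev r ++ m₂ ++ s ∧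
      2 * t.length ≤ norm a ∧ 2 * s.length ≤ norm b ∧ m₁ ≠ [] ∧ m₂ ≠ [] ∧
      ⁅a, b⁆.toWord = a₁ ++ m₁ ++ m₂ ++ invRev b₂ := by
  obtain ⟨h₁, h₂, h₃, h₄, h₅, h₆⟩ := h
  obtain ⟨a₁, t, b₁, hat, hbt, hab⟩ := exists_toWord_mul a b
  obtain ⟨b₂, s, a₂, hbs, has, hba⟩ := exists_toWord_mul b a
  obtain ⟨f, r, a₃, hbr, har, hbar⟩ := exists_toWord_mul b a⁻¹
  obtain ⟨hta, htb⟩ := two_mul_length_le_of_toWord_mul hat hbt hab h₁ h₂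
  obtain ⟨hsb, hsa⟩ := two_mul_length_le_of_toWord_mul hbs has hba h₄ h₃
  obtain ⟨hrb, hra⟩ := two_mul_length_le_of_toWord_mul hbr har hbar h₆ (by rwa [norm_inv_eq])
  have har' : a.toWord = invRev a₃ ++ r := by
    rw [← invRev_invRev (L₁ := a.toWord), ← toWord_inv, har, invRev_append, invRev_invRev]
  have has' : a⁻¹.toWord = invRev a₂ ++ s := by
    rw [toWord_inv, has, invRev_append, invRev_invRev]
  obtain ⟨m₁, hm₁, rfl, rfl⟩ := exists_middle_ne_nil isReduced_toWord (by simpa using hb) hbt hbr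
    htb hrb fun hl => (List.append_inj' (hat.symm.trans har') hl).2
  obtain ⟨m₂, hm₂, rfl, ha₂⟩ := exists_middle_ne_nil isReduced_toWord
    (by rwa [Ne, toWord_eq_nil_iff, inv_eq_one]) har has' hra (by rwa [toWord_inv, invRev_length])
    fun hl => (List.append_inj' (hbr.symm.trans hbs) hl).2
  refine ⟨a₁, t, m₁, r, m₂, s, b₂, hat, List.append_assoc .. ▸ hbt, hbs,
    List.append_assoc .. ▸ har, hta, hsb, hm₁, hm₂, ?_⟩
  have hba' : (b * a)⁻¹.toWord = invRev r ++ m₂ ++ invRev b₂ := by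
    rw [toWord_inv, hba, invRev_append, ha₂]
  have hm : IsReduced (m₁ ++ m₂) := (hbar ▸ isReduced_toWord).infix ⟨invRev t, s, by simp⟩
  rw [show ⁅a, b⁆ = a * b * (b * a)⁻¹ by group]
  exact toWord_mul_of_isReduced (by rw [hab, List.append_assoc]) hba' hm hm₁ hm₂

theorem IsMinimalPair.norm_eq_one {a b : FreeGroup α} (h : IsMinimalPair a b) (ha : a ≠ 1)
    (hb : b ≠ 1) (hc : norm ⁅a, b⁆ ≤ 4) : norm a = 1 ∧ norm b = 1 := by
  obtain ⟨a₁, t, m₁, r, m₂, s, b₂, hat, hbt, hbs, has, hta, hsb, hm₁, hm₂, hw⟩ :=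
    h.exists_toWord_commutator ha hb
  have hai : a⁻¹.toWord = invRev t ++ invRev a₁ := by rw [toWord_inv, hat, invRev_append]
  have la₁ : norm a = a₁.length + t.length := by simp [FreeGroup.norm, hat]
  have la₂ : norm a = r.length + m₂.length + s.length := by
    rw [← norm_inv_eq]; simp [FreeGroup.norm, has, add_assoc]
  have lb₁ : norm b = t.length + m₁.length + r.length := by simp [FreeGroup.norm, hbt, add_assoc]
  have lb₂ : norm b = b₂.length + s.length := by simp [FreeGroup.norm, hbs]
  have lc : norm ⁅a, b⁆ = a₁.length + m₁.length + m₂.length + b₂.length := by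
    simp [FreeGroup.norm, hw, add_assoc]
  have ha₀ : norm a ≠ 0 := by rwa [Ne, FreeGroup.norm_eq_zero]
  have := List.length_pos_iff.2 hm₁
  have := List.length_pos_iff.2 hm₂
  obtain ⟨ht, hr, hs, hm⟩ : t.length ≤ 1 ∧ r.length = 0 ∧ s.length = t.length ∧
      m₂.length = 1 ∧ b₂.length = 1 := by omega
  rcases Nat.le_one_iff_eq_zero_or_eq_one.1 ht with ht | ht
  · omega
  -- Now `b₂ = m₂ = t⁻¹`, so the commutator word ends in `t⁻¹ t`.
  exfalso
  obtain rfl : r = [] := List.eq_nil_of_length_eq_zero hr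
  have hb₂ : b₂ = invRev t :=
    (List.append_inj (hbs.symm.trans (hbt.trans (List.append_assoc ..))) (by rw [invRev_length]; omega)).1
  have hm₂ : m₂ = invRev t :=
    (List.append_inj (has.symm.trans hai)
      (by simp only [invRev_empty, List.nil_append, invRev_length]; omega)).1
  subst hb₂ hm₂
  rw [invRev_invRev] at hw
  exact not_isReduced_invRev_append (r := t) (List.ne_nil_of_length_pos (by omega))
    ((hw ▸ isReduced_toWord).infix ⟨a₁ ++ m₁, [], by simp⟩)

end Words

def transvectionX (k : ℤ) : F₂ ≃* F₂ :=
  MonoidHom.toMulEquiv (lift fun i => cond i (X * Y ^ k) Y) (lift fun i => cond i (X * Y ^ (-k)) Y)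
    (by ext i; cases i <;> simp [X, Y]) (by ext i; cases i <;> simp [X, Y])

def transvectionY (k : ℤ) : F₂ ≃* F₂ :=
  MonoidHom.toMulEquiv (lift fun i => cond i X (Y * X ^ k)) (lift fun i => cond i X (Y * X ^ (-k)))
    (by ext i; cases i <;> simp [X, Y]) (by ext i; cases i <;> simp [X, Y])

@[simp]
theorem transvectionX_X (k : ℤ) : transvectionX k X = X * Y ^ k := by
  simp [transvectionX, X, Y]

@[simp]
theorem transvectionX_Y (k : ℤ) : transvectionX k Y = Y := by
  simp [transvectionX, X, Y]

@[simp]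
theorem transvectionY_X (k : ℤ) : transvectionY k X = X := by
  simp [transvectionY, X, Y]

@[simp]
theorem transvectionY_Y (k : ℤ) : transvectionY k Y = Y * X ^ k := by
  simp [transvectionY, X, Y]

theorem mulEquiv_ext_X_Y {θ₁ θ₂ : F₂ ≃* F₂} (hX : θ₁ X = θ₂ X) (hY : θ₁ Y = θ₂ Y) : θ₁ = θ₂ :=
  MulEquiv.toMonoidHom_injective <| FreeGroup.ext_hom _ _ fun i => by cases i; exacts [hY, hX]

def IsBasisPair (a b : F₂) : Prop :=
  ∃ θ : F₂ ≃* F₂, θ X = a ∧ θ Y = b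

theorem IsBasisPair.mul_zpow_right {a b : F₂} (h : IsBasisPair a b) (k : ℤ) :
    IsBasisPair (a * b ^ k) b :=
  let ⟨θ, ha, hb⟩ := h
  ⟨(transvectionX k).trans θ, by simp [ha, hb], by simp [hb]⟩

theorem IsBasisPair.mul_zpow_left {a b : F₂} (h : IsBasisPair a b) (k : ℤ) :
    IsBasisPair a (b * a ^ k) :=
  let ⟨θ, ha, hb⟩ := h
  ⟨(transvectionY k).trans θ, by simp [ha], by simp [ha, hb]⟩

theorem eq_X_and_eq_Y_of_norm_eq_one {a b : F₂} (ha : norm a = 1) (hb : norm b = 1)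
    (h : ⁅a, b⁆ = ⁅X, Y⁆) : a = X ∧ b = Y := by
  obtain ⟨x, hx⟩ := List.length_eq_one_iff.1 ha
  obtain ⟨y, hy⟩ := List.length_eq_one_iff.1 hb
  rw [← mk_toWord (x := a), ← mk_toWord (x := b), hx, hy] at h ⊢
  have hletters : ∀ x y : Bool × Bool,
      (⁅mk [x], mk [y]⁆ : F₂) = ⁅X, Y⁆ → x = (true, true) ∧ y = (false, true) := by
    decide
  obtain ⟨rfl, rfl⟩ := hletters x y h
  exact ⟨rfl, rfl⟩

theorem IsMinimalPair.eq_X_and_eq_Y {a b : F₂} (hmin : IsMinimalPair a b)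
    (h : ⁅a, b⁆ = ⁅X, Y⁆) : a = X ∧ b = Y := by
  have hXY : ⁅X, Y⁆ ≠ 1 := by decide
  have ha : a ≠ 1 := by rintro rfl; simp [eq_comm, hXY] at h
  have hb : b ≠ 1 := by rintro rfl; simp [eq_comm, hXY] at h
  obtain ⟨ha₁, hb₁⟩ := hmin.norm_eq_one ha hb (by rw [h]; decide)
  exact eq_X_and_eq_Y_of_norm_eq_one ha₁ hb₁ h

theorem isBasisPair_of_commutator_eq {a b : F₂} (h : ⁅a, b⁆ = ⁅X, Y⁆) : IsBasisPair a b := by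
  induction hn : norm a + norm b using Nat.strong_induction_on generalizing a b with
  | _ n ih =>
  subst hn
  have ih' {a' b' : F₂} (h' : ⁅a', b'⁆ = ⁅X, Y⁆) (hlt : norm a' + norm b' < norm a + norm b) :
      IsBasisPair a' b' := ih _ hlt h' rfl
  by_cases hmin : IsMinimalPair a b
  · obtain ⟨rfl, rfl⟩ := hmin.eq_X_and_eq_Y h
    exact ⟨MulEquiv.refl F₂, rfl, rfl⟩
  simp only [IsMinimalPair, not_and_or, not_le] at hmin
  rcases hmin with hlt | hlt | hlt | hlt | hlt | hlt
  · have h' : ⁅a * b, b⁆ = ⁅X, Y⁆ := by rw [← h]; simp only [commutatorElement_def]; group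
    simpa using (ih' h' (by omega)).mul_zpow_right (-1)
  · have h' : ⁅a * b, a⁻¹⁆ = ⁅X, Y⁆ := by rw [← h]; simp only [commutatorElement_def]; group
    simpa using ((ih' h' (by rw [norm_inv_eq]; omega)).mul_zpow_left 1).mul_zpow_right (-1)
  · have h' : ⁅b⁻¹, b * a⁆ = ⁅X, Y⁆ := by rw [← h]; simp only [commutatorElement_def]; group
    simpa using ((ih' h' (by rw [norm_inv_eq]; omega)).mul_zpow_right 1).mul_zpow_left (-1)
  · have h' : ⁅a, b * a⁆ = ⁅X, Y⁆ := by rw [← h]; simp only [commutatorElement_def]; group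
    simpa using (ih' h' (by omega)).mul_zpow_left (-1)
  · have h' : ⁅a * b⁻¹, b⁆ = ⁅X, Y⁆ := by rw [← h]; simp only [commutatorElement_def]; group
    simpa using (ih' h' (by rw [← norm_inv_eq, mul_inv_rev, inv_inv]; omega)).mul_zpow_right 1
  · have h' : ⁅a, b * a⁻¹⁆ = ⁅X, Y⁆ := by rw [← h]; simp only [commutatorElement_def]; group
    simpa using (ih' h' (by omega)).mul_zpow_left 1

/-- The map `θ ↦ (θ(X), θ(Y))` is a bijection from the group of automorphisms of the
free group on `X, Y` fixing the commutator `(X,Y)` onto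
`{(g₊, g₋) ∈ F₂² | (g₋, g₊) = (Y, X)}` (where `(a,b) = aba⁻¹b⁻¹`). -/
theorem stmt7 :
    Function.Injective toPair ∧
    Set.range toPair = {p : F₂ × F₂ | ⁅p.2, p.1⁆ = ⁅Y, X⁆} := by
  refine ⟨fun θ₁ θ₂ h => Subtype.ext (mulEquiv_ext_X_Y (congrArg Prod.fst h)
    (congrArg Prod.snd h)), ?_⟩
  ext ⟨a, b⟩
  have hswap : ⁅b, a⁆ = ⁅Y, X⁆ ↔ ⁅a, b⁆ = ⁅X, Y⁆ := by
    rw [← commutatorElement_inv a b, ← commutatorElement_inv X Y, inv_inj]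
  simp only [Set.mem_range, Set.mem_ofPred_eq, hswap]
  constructor
  · rintro ⟨⟨θ, hθ⟩, hab⟩
    simp only [toPair, Prod.mk.injEq] at hab
    rw [← hab.1, ← hab.2, ← map_commutatorElement]
    exact hθ
  · intro h
    obtain ⟨θ, rfl, rfl⟩ := isBasisPair_of_commutator_eq h
    exact ⟨⟨θ, (map_commutatorElement θ X Y).trans h⟩, rfl⟩

end Stmt7
end

section
/- Let n ≥ 2. Let tₙ be the ℚ-Lie algebra with generators t_{ij} (1 ≤ i ≠ j ≤ n) and relations t_{ji} = t_{ij}, [t_{ij}, t_{ik} + t_{jk}] = 0 for i,j,k distinct, and [t_{ij}, t_{kl}] = 0 for i,j,k,l distinct. Let t_{1,n} be the ℚ-Lie algebra with generators x_i⁺, x_i⁻ (1 ≤ i ≤ n) and relations: Σᵢ x_i⁺ = Σᵢ x_i⁻ = 0; [x_i⁺, x_j⁺] = [x_i⁻, x_j⁻] = 0 for i ≠ j; [x_i⁺, x_j⁻] = [x_j⁺, x_i⁻] for i ≠ j; and [x_k^±, [x_i⁺, x_j⁻]] = 0 for i,j,k distinct. Then there is a unique Lie algebra homomorphism tₙ →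 t_{1,n} sending t_{ij} ↦ [x_i⁺, x_j⁻]. -/
/-!
Since `tₙ` is presented, it suffices that the elements `[x_i⁺, x_j⁻]` satisfy its relations.
Each `[x_i⁺, x_j⁻]` commutes with `x_k^±` for `k ∉ {i, j}`. This kills `[t_ij, t_kl]` by the
Jacobi identity, and reduces `[t_ij, t_ik + t_jk]` to `[[t_ij, x_i⁺ + x_j⁺], x_k⁻]`, which
vanishes because `x_i⁺ + x_j⁺ = -Σ_{m ∉ {i,j}} x_m⁺`.
-/

namespace Stmt9

/-- Index type for the generators `t_{ij}` (`i ≠ j`) of `tₙ`. -/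
abbrev TGen (n : ℕ) := {p : Fin n × Fin n // p.1 ≠ p.2}

/-- The generator `t_{ij}` of the free Lie algebra, for `i ≠ j`. -/
noncomputable def T {n : ℕ} (i j : Fin n) (h : i ≠ j) : FreeLieAlgebra ℚ (TGen n) :=
  FreeLieAlgebra.of ℚ (⟨(i, j), h⟩ : TGen n)

/-- The defining relations of `tₙ`: `t_{ji} = t_{ij}`, `[t_{ij}, t_{ik} + t_{jk}] = 0`
for `i,j,k` distinct, `[t_{ij}, t_{kl}] = 0` for `i,j,k,l` distinct. -/
def tRels (n : ℕ) : Set (FreeLieAlgebra ℚ (TGen n)) :=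
  {z | ∃ (i j : Fin n) (h : i ≠ j), z = T j i h.symm - T i j h} ∪
  {z | ∃ (i j k : Fin n) (hij : i ≠ j) (hik : i ≠ k) (hjk : j ≠ k),
      z = ⁅T i j hij, T i k hik + T j k hjk⁆} ∪
  {z | ∃ (i j k l : Fin n) (hij : i ≠ j) (hkl : k ≠ l),
      i ≠ k ∧ i ≠ l ∧ j ≠ k ∧ j ≠ l ∧ z = ⁅T i j hij, T k l hkl⁆}

/-- The Lie ideal generated by the relations of `tₙ`. -/
noncomputable def tIdeal (n : ℕ) : LieIdeal ℚ (FreeLieAlgebra ℚ (TGen n)) :=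
  LieSubmodule.lieSpan ℚ _ (tRels n)

/-- The presented Lie algebra `tₙ`. -/
abbrev tAlg (n : ℕ) := FreeLieAlgebra ℚ (TGen n) ⧸ tIdeal n

/-- The image of the generator `t_{ij}` in `tₙ`. -/
noncomputable def tGen {n : ℕ} (i j : Fin n) (h : i ≠ j) : tAlg n :=
  LieSubmodule.Quotient.mk (N := tIdeal n) (T i j h)

/-- Index type for the generators `x_i⁺` (`(true, i)`) and `x_i⁻` (`(false, i)`)
of `t_{1,n}`. -/
abbrev XGen (n : ℕ) := Bool × Fin n

/-- The generator `x_i^ε` of the free Lie algebra (`ε = true` means `+`). -/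
noncomputable def Xf {n : ℕ} (ε : Bool) (i : Fin n) : FreeLieAlgebra ℚ (XGen n) :=
  FreeLieAlgebra.of ℚ ((ε, i) : XGen n)

/-- The defining relations of `t_{1,n}`: `Σᵢ x_i^± = 0`; `[x_i^±, x_j^±] = 0` for
`i ≠ j`; `[x_i⁺, x_j⁻] = [x_j⁺, x_i⁻]` for `i ≠ j`; `[x_k^±, [x_i⁺, x_j⁻]] = 0`
for `i,j,k` distinct. -/
def t1Rels (n : ℕ) : Set (FreeLieAlgebra ℚ (XGen n)) :=
  {z | ∃ ε : Bool, z = ∑ i : Fin n, Xf ε i} ∪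
  {z | ∃ (ε : Bool) (i j : Fin n), i ≠ j ∧ z = ⁅Xf ε i, Xf ε j⁆} ∪
  {z | ∃ (i j : Fin n), i ≠ j ∧ z = ⁅Xf true i, Xf false j⁆ - ⁅Xf true j, Xf false i⁆} ∪
  {z | ∃ (ε : Bool) (i j k : Fin n), i ≠ j ∧ i ≠ k ∧ j ≠ k ∧
      z = ⁅Xf ε k, ⁅Xf true i, Xf false j⁆⁆}

/-- The Lie ideal generated by the relations of `t_{1,n}`. -/
noncomputable def t1Ideal (n : ℕ) : LieIdeal ℚ (FreeLieAlgebra ℚ (XGen n)) :=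
  LieSubmodule.lieSpan ℚ _ (t1Rels n)

/-- The presented Lie algebra `t_{1,n}`. -/
abbrev t1Alg (n : ℕ) := FreeLieAlgebra ℚ (XGen n) ⧸ t1Ideal n

/-- The image of the generator `x_i^ε` in `t_{1,n}`. -/
noncomputable def xGen {n : ℕ} (ε : Bool) (i : Fin n) : t1Alg n :=
  LieSubmodule.Quotient.mk (N := t1Ideal n) (Xf ε i)

end Stmt9

namespace LieIdeal

variable {R L L' : Type*} [CommRing R] [LieRing L] [LieAlgebra R L] [LieRing L'] [LieAlgebra R L']
  (I : LieIdeal R L)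

noncomputable def mkQ : L →ₗ⁅R⁆ L ⧸ I :=
  { I.toSubmodule.mkQ with map_lie' := rfl }

noncomputable def liftQ (f : L →ₗ⁅R⁆ L') (h : I ≤ f.ker) : L ⧸ I →ₗ⁅R⁆ L' :=
  { I.toSubmodule.liftQ f.toLinearMap fun x hx => LieHom.mem_ker.mp (h hx) with
    map_lie' := by
      rintro ⟨x⟩ ⟨y⟩
      exact f.map_lie x y }

theorem lieHom_ext {f g : L ⧸ I →ₗ⁅R⁆ L'} (h : f.comp I.mkQ = g.comp I.mkQ) : f = g :=
  LieHom.ext fun x => Quotient.inductionOn' x (LieHom.congr_fun h)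

end LieIdeal

theorem FreeLieAlgebra.existsUnique_lieHom_quotient_lieSpan {R X L : Type*} [CommRing R]
    [LieRing L] [LieAlgebra R L] {rels : Set (FreeLieAlgebra R X)} (g : X → L)
    (hrels : ∀ r ∈ rels, lift R g r = 0) :
    ∃! φ : FreeLieAlgebra R X ⧸ LieSubmodule.lieSpan R (FreeLieAlgebra R X) rels →ₗ⁅R⁆ L,
      ∀ x, φ (LieSubmodule.Quotient.mk (of R x)) = g x := by
  set I := LieSubmodule.lieSpan R (FreeLieAlgebra R X) rels
  have hI : I ≤ (lift R g).ker := LieSubmodule.lieSpan_le.mpr hrels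
  refine ⟨LieIdeal.liftQ I (lift R g) hI, fun x => lift_of_apply g x, fun ψ hψ => ?_⟩
  refine LieIdeal.lieHom_ext I (hom_ext fun x => ?_)
  exact (hψ x).trans (lift_of_apply g x).symm

namespace Stmt9

section t1Relations

variable {n : ℕ}

theorem xGen_eq_zero_of_mem_t1Rels {z : FreeLieAlgebra ℚ (XGen n)} (hz : z ∈ t1Rels n) :
    (LieSubmodule.Quotient.mk z : t1Alg n) = 0 :=
  LieSubmodule.Quotient.mk_eq_zero'.mpr (LieSubmodule.subset_lieSpan hz)

theorem sum_xGen (ε : Bool) : ∑ i : Fin n, xGen ε i = 0 := by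
  rw [← xGen_eq_zero_of_mem_t1Rels (Or.inl (Or.inl (Or.inl ⟨ε, rfl⟩)))]
  exact (map_sum (t1Ideal n).toSubmodule.mkQ _ _).symm

theorem lie_xGen_true_xGen_false_comm {i j : Fin n} (hij : i ≠ j) :
    ⁅xGen true i, xGen false j⁆ = ⁅xGen true j, xGen false i⁆ :=
  sub_eq_zero.mp (xGen_eq_zero_of_mem_t1Rels (Or.inl (Or.inr ⟨i, j, hij, rfl⟩)))

theorem lie_lie_xGen_eq_zero (ε : Bool) {i j k : Fin n} (hij : i ≠ j) (hik : i ≠ k)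
    (hjk : j ≠ k) : ⁅⁅xGen true i, xGen false j⁆, xGen ε k⁆ = 0 := by
  rw [← lie_skew, neg_eq_zero]
  exact xGen_eq_zero_of_mem_t1Rels (Or.inr ⟨ε, i, j, k, hij, hik, hjk, rfl⟩)

theorem lie_lie_xGen_add_xGen_eq_zero {i j : Fin n} (hij : i ≠ j) :
    ⁅⁅xGen true i, xGen false j⁆, xGen true i + xGen true j⁆ = 0 := by
  set A := ⁅xGen true i, xGen false j⁆
  calc ⁅A, xGen true i + xGen true j⁆ = ∑ m, ⁅A, xGen true m⁆ := by
        rw [← Finset.sum_pair hij, lie_sum]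
        refine Finset.sum_subset (Finset.subset_univ _) fun m _ hm => ?_
        simp only [Finset.mem_insert, Finset.mem_singleton, not_or] at hm
        exact lie_lie_xGen_eq_zero true hij (Ne.symm hm.1) (Ne.symm hm.2)
    _ = 0 := by rw [← lie_sum, sum_xGen, lie_zero]

theorem lie_lie_xGen_lie_add_eq_zero {i j k : Fin n} (hij : i ≠ j) (hik : i ≠ k) (hjk : j ≠ k) :
    ⁅⁅xGen true i, xGen false j⁆,
      ⁅xGen true i, xGen false k⁆ + ⁅xGen true j, xGen false k⁆⁆ = 0 := by
  rw [← add_lie, leibniz_lie, lie_lie_xGen_eq_zero false hij hik hjk, lie_zero, add_zero,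
    lie_lie_xGen_add_xGen_eq_zero hij, zero_lie]

theorem lie_lie_xGen_lie_xGen_eq_zero {i j k l : Fin n} (hij : i ≠ j) (hik : i ≠ k)
    (hil : i ≠ l) (hjk : j ≠ k) (hjl : j ≠ l) :
    ⁅⁅xGen true i, xGen false j⁆, ⁅xGen true k, xGen false l⁆⁆ = 0 := by
  rw [leibniz_lie, lie_lie_xGen_eq_zero true hij hik hjk, lie_lie_xGen_eq_zero false hij hil hjl,
    zero_lie, lie_zero, zero_add]

end t1Relations

theorem lift_eq_zero_of_mem_tRels {n : ℕ} {z : FreeLieAlgebra ℚ (TGen n)} (hz : z ∈ tRels n) :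
    FreeLieAlgebra.lift ℚ (fun p : TGen n => ⁅xGen true p.1.1, xGen false p.1.2⁆) z = 0 := by
  rcases hz with (⟨i, j, hij, rfl⟩ | ⟨i, j, k, hij, hik, hjk, rfl⟩) |
    ⟨i, j, k, l, hij, -, hik, hil, hjk, hjl, rfl⟩ <;>
    simp only [T, map_sub, LieHom.map_lie, map_add, FreeLieAlgebra.lift_of_apply]
  · rw [lie_xGen_true_xGen_false_comm hij.symm, sub_self]
  · exact lie_lie_xGen_lie_add_eq_zero hij hik hjk
  · exact lie_lie_xGen_lie_xGen_eq_zero hij hik hil hjk hjl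

theorem stmt9_general (n : ℕ) :
    ∃! φ : tAlg n →ₗ⁅ℚ⁆ t1Alg n,
      ∀ (i j : Fin n) (h : i ≠ j), φ (tGen i j h) = ⁅xGen true i, xGen false j⁆ := by
  obtain ⟨φ, hφ, hunique⟩ := FreeLieAlgebra.existsUnique_lieHom_quotient_lieSpan
    (fun p : TGen n => ⁅xGen true p.1.1, xGen false p.1.2⁆) fun _ => lift_eq_zero_of_mem_tRels
  exact ⟨φ, fun i j h => hφ ⟨(i, j), h⟩, fun ψ hψ => hunique ψ fun p => hψ p.1.1 p.1.2 p.2⟩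

/-- There is a unique Lie algebra homomorphism `tₙ → t_{1,n}` sending
`t_{ij} ↦ [x_i⁺, x_j⁻]`. -/
theorem stmt9 (n : ℕ) (hn : 2 ≤ n) :
    ∃! φ : tAlg n →ₗ⁅ℚ⁆ t1Alg n,
      ∀ (i j : Fin n) (h : i ≠ j), φ (tGen i j h) = ⁅xGen true i, xGen false j⁆ :=
  stmt9_general n

end Stmt9
end

section
/- Let L be the free Lie algebra on two generators x, y over ℚ, let n ≥ 0, and let δ be the unique derivation of L with δ(x) = (ad x)^{2n+2}(y) and δ(y) = (1/2) Σ_{p+q=2n+1, p,q≥0} (−1)^p [(ad x)^p(y), (ad x)^q(y)]. Then δ([x, y]) = 0. -/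
namespace Stmt12

/-- The free Lie algebra on two generators `x, y` over `ℚ`. -/
abbrev L := FreeLieAlgebra ℚ Bool

/-- The generator `x`. -/
noncomputable def x : L := FreeLieAlgebra.of ℚ true

/-- The generator `y`. -/
noncomputable def y : L := FreeLieAlgebra.of ℚ false

/-- If `δ` is the derivation of the free Lie algebra on `x, y` with
`δ(x) = (ad x)^{2n+2}(y)` and
`δ(y) = (1/2) Σ_{p+q=2n+1} (−1)^p [(ad x)^p(y), (ad x)^q(y)]`,
then `δ([x,y]) = 0`. -/
theorem stmt12 (n : ℕ) (δ : LieDerivation ℚ L L)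
    (hx : δ x = (LieAlgebra.ad ℚ L x ^ (2 * n + 2)) y)
    (hy : δ y = (2 : ℚ)⁻¹ • ∑ p ∈ Finset.range (2 * n + 2),
        ((-1 : ℚ) ^ p) • ⁅(LieAlgebra.ad ℚ L x ^ p) y,
          (LieAlgebra.ad ℚ L x ^ (2 * n + 1 - p)) y⁆) :
    δ ⁅x, y⁆ = 0 := by
  have key : δ ⁅x, y⁆ = ⁅δ x, y⁆ + ⁅x, δ y⁆ := (δ.apply_lie_eq_add x y).trans (add_comm _ _)
  set a : ℕ → L := fun p => (LieAlgebra.ad ℚ L x ^ p) y with ha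
  have hstep : ∀ p, a (p + 1) = ⁅x, a p⁆ := by
    intro p
    simp [ha, pow_succ', LieAlgebra.ad_apply]
  set f : ℕ → L := fun p => ((-1 : ℚ) ^ p) • ⁅a p, a (2 * n + 2 - p)⁆ with hf
  have hterm : ∀ p ∈ Finset.range (2 * n + 2),
      ⁅x, ((-1 : ℚ) ^ p) • ⁅a p, a (2 * n + 1 - p)⁆⁆ = f p - f (p + 1) := by
    intro p hp
    rw [Finset.mem_range] at hp
    have h1 : 2 * n + 2 - (p + 1) = 2 * n + 1 - p := by omega
    have h2 : 2 * n + 1 - p + 1 = 2 * n + 2 - p := by omega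
    rw [lie_smul, leibniz_lie, ← hstep, ← hstep, h2, hf]
    simp only [h1, pow_succ, smul_add]
    module
  have hsum : ⁅x, δ y⁆ = (2 : ℚ)⁻¹ • (f 0 - f (2 * n + 2)) := by
    have hls : ∀ s : Finset ℕ, ∀ g : ℕ → L, ⁅x, ∑ p ∈ s, g p⁆ = ∑ p ∈ s, ⁅x, g p⁆ := by
      intro s g
      rw [show ∀ z : L, ⁅x, z⁆ = LieAlgebra.ad ℚ L x z from fun _ => rfl, map_sum]
      rfl
    rw [hy, lie_smul, hls, Finset.sum_congr rfl hterm, Finset.sum_range_sub' f]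
  have hf0 : f 0 = ⁅y, a (2 * n + 2)⁆ := by simp [hf, ha]
  have hftop : f (2 * n + 2) = ⁅a (2 * n + 2), y⁆ := by
    have : (-1 : ℚ) ^ (2 * n + 2) = 1 := by
      rw [show 2 * n + 2 = 2 * (n + 1) by ring, pow_mul]; norm_num
    simp [hf, ha, this]
  rw [key, hx, hsum, hf0, hftop, ← lie_skew y (a (2 * n + 2))]
  have : (LieAlgebra.ad ℚ L x ^ (2 * n + 2)) y = a (2 * n + 2) := rfl
  rw [this]
  rw [smul_sub]
  module


end Stmt12
end

section
/- Let 0 < t ≤ t′ be reals, n ≥ 1, and let s₁, …, sₙ be complex numbers such that every partial sum s_i + s_{i+1} + ⋯ + s_j (1 ≤ i ≤ j ≤ n) is nonzero. Then ∫_{t ≤ t₁ ≤ ⋯ ≤ tₙ ≤ t′} t₁^{s₁−1} ⋯ tₙ^{sₙ−1} dt₁⋯dtₙ = Σ_{k=0}^{n} (−1)^k · (t′)^{s_{k+1}+⋯+sₙ} / (s_{k+1}(s_{k+1}+s_{k+2})⋯(s_{k+1}+⋯+sₙ)) · t^{s₁+⋯+s_k} / (s_k(s_k+s_{k−1})⋯(s_k+⋯+s₁)),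 where an empty product of denominators is 1 and an empty exponent sum is 0. -/
/-!
Let `I_n(x)` be the integral over `simplex n t x`. Integrating out the last coordinate first gives
`I_{n+1}(x) = ∫_t^x y^{s_n - 1} I_n(y) dy`. In terms of the partial sums `z_k = s_0 + ⋯ + s_{k-1}`
the right-hand side of the theorem reads `Σ_k x^{z_n - z_k} t^{z_k} / ∏_{i ≠ k} (z_i - z_k)`, and
it satisfies the same recursion: integrating term by term produces all terms of the next
right-hand side except the one with `k = n + 1`, and that one appears through the identity
`Σ_k ∏_{i ≠ k} (z_i - z_k)⁻¹ = 0`, the vanishing of the top coefficient of the Lagrange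
interpolant of a constant. The partial sums are pairwise distinct exactly because every sum
`s_i + ⋯ + s_j` is nonzero.
-/

open MeasureTheory

namespace Stmt15

/-- The simplex `{t ≤ u₁ ≤ ⋯ ≤ uₙ ≤ t'}` in `ℝⁿ`. -/
def simplex (n : ℕ) (t t' : ℝ) : Set (Fin n → ℝ) :=
  {u | (∀ i j : Fin n, i ≤ j → u i ≤ u j) ∧ ∀ i, t ≤ u i ∧ u i ≤ t'}

open Finset

lemma isCompact_simplex (n : ℕ) (t t' : ℝ) : IsCompact (simplex n t t') := by
  have hsimplex : simplex n t t' = {u | Monotone u} ∩ Set.Icc (fun _ => t) (fun _ => t') := by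
    ext u
    simp [simplex, Monotone, Pi.le_def, forall_and]
  rw [hsimplex]
  exact isCompact_Icc.inter_left isClosed_monotone

lemma monotone_snoc_iff {α : Type*} [Preorder α] {n : ℕ} {y : Fin n → α} {x : α} :
    Monotone (Fin.snoc y x : Fin (n + 1) → α) ↔ Monotone y ∧ ∀ i, y i ≤ x := by
  refine ⟨fun h => ⟨fun i j hij => ?_, fun i => ?_⟩, fun ⟨hy, hx⟩ i j hij => ?_⟩
  · simpa using h (Fin.castSucc_le_castSucc_iff.2 hij)
  · simpa using h (Fin.le_last (Fin.castSucc i))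
  · induction j using Fin.lastCases with
    | last => induction i using Fin.lastCases <;> simp [hx]
    | cast j =>
      induction i using Fin.lastCases with
      | last => exact absurd hij (Fin.castSucc_lt_last j).not_ge
      | cast i => simpa using hy (Fin.castSucc_le_castSucc_iff.1 hij)

lemma snoc_mem_simplex_succ {n : ℕ} {t t' x : ℝ} {y : Fin n → ℝ} :
    Fin.snoc y x ∈ simplex (n + 1) t t' ↔ x ∈ Set.Icc t t' ∧ y ∈ simplex n t x := by
  change Monotone (Fin.snoc y x : Fin (n + 1) → ℝ) ∧ _ ↔ _ ∧ Monotone y ∧ _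
  simp only [monotone_snoc_iff, Fin.forall_fin_succ', Fin.snoc_castSucc, Fin.snoc_last,
    Set.mem_Icc]
  constructor
  · rintro ⟨⟨hy, hyx⟩, hb, hx⟩
    exact ⟨hx, hy, fun i => ⟨(hb i).1, hyx i⟩⟩
  · rintro ⟨hx, hy, hb⟩
    exact ⟨⟨hy, fun i => (hb i).2⟩, fun i => ⟨(hb i).1, (hb i).2.trans hx.2⟩, hx⟩

lemma setIntegral_eq_integral_setIntegral_snoc {α E : Type*} [MeasureSpace α]
    [SigmaFinite (volume : Measure α)] [NormedAddCommGroup E] [NormedSpace ℝ E] {n : ℕ}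
    {S : Set (Fin (n + 1) → α)} (hS : MeasurableSet S) {f : (Fin (n + 1) → α) → E}
    (hf : IntegrableOn f S) :
    ∫ u in S, f u = ∫ x, ∫ y in {y | Fin.snoc y x ∈ S}, f (Fin.snoc y x) := by
  set e := MeasurableEquiv.piFinSuccAbove (fun _ : Fin (n + 1) => α) (Fin.last n)
  have he : MeasurePreserving e.symm :=
    (volume_preserving_piFinSuccAbove (fun _ : Fin (n + 1) => α) (Fin.last n)).symm
  have hsnoc : ∀ p : α × (Fin n → α), e.symm p = Fin.snoc p.2 p.1 :=
    fun p => Fin.insertNth_last' p.1 p.2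
  have hint : Integrable (fun p => S.indicator f (Fin.snoc p.2 p.1))
      ((volume : Measure α).prod (volume : Measure (Fin n → α))) := by
    have := he.integrable_comp_emb e.symm.measurableEmbedding |>.2
      ((integrable_indicator_iff hS).2 hf)
    rw [Measure.volume_eq_prod] at this
    simpa only [Function.comp_def, hsnoc] using this
  rw [← integral_indicator hS, ← he.integral_comp e.symm.measurableEmbedding,
    Measure.volume_eq_prod]
  simp only [hsnoc]
  rw [integral_prod _ hint]
  congr 1 with x
  have hslice : MeasurableSet {y : Fin n → α | Fin.snoc y x ∈ S} :=
    hS.preimage <| by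
      simpa only [Function.comp_def, hsnoc] using
        e.symm.measurable.comp (measurable_prodMk_left (x := x))
  rw [← integral_indicator hslice]
  congr 1 with y

lemma setIntegral_simplex_succ {E : Type*} [NormedAddCommGroup E] [NormedSpace ℝ E] {n : ℕ}
    {t t' : ℝ} {f : (Fin (n + 1) → ℝ) → E} (hf : IntegrableOn f (simplex (n + 1) t t')) :
    ∫ u in simplex (n + 1) t t', f u
      = ∫ x in Set.Icc t t', ∫ y in simplex n t x, f (Fin.snoc y x) := by
  rw [setIntegral_eq_integral_setIntegral_snoc (isCompact_simplex _ _ _).isClosed.measurableSet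
    hf, ← integral_indicator measurableSet_Icc]
  congr 1 with x
  simp only [snoc_mem_simplex_succ]
  by_cases hx : x ∈ Set.Icc t t' <;> simp [hx]

lemma integrableOn_prod_cpow_simplex {n : ℕ} (c : Fin n → ℂ) {t t' : ℝ} (ht : 0 < t) :
    IntegrableOn (fun u : Fin n → ℝ => ∏ i, (u i : ℂ) ^ c i) (simplex n t t') := by
  refine ContinuousOn.integrableOn_compact (isCompact_simplex n t t')
    (continuousOn_finsetProd _ fun i _ u hu => ?_)
  have hui : u i ≠ 0 := (ht.trans_le (hu.2 i).1).ne'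
  exact ((Complex.continuousAt_ofReal_cpow_const _ _ (Or.inr hui)).comp (x := u)
    (continuous_apply i).continuousAt).continuousWithinAt

lemma prod_snoc_cpow {n : ℕ} (c : Fin (n + 1) → ℂ) (y : Fin n → ℝ) (x : ℝ) :
    ∏ i, ((Fin.snoc y x : Fin (n + 1) → ℝ) i : ℂ) ^ c i
      = (∏ i : Fin n, (y i : ℂ) ^ c i.castSucc) * (x : ℂ) ^ c (Fin.last n) := by
  simp [Fin.prod_univ_castSucc]

lemma integral_Icc_cpow_sub_one {a b : ℝ} (ha : 0 < a) (hab : a ≤ b) {r : ℂ} (hr : r ≠ 0) :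
    ∫ x in Set.Icc a b, (x : ℂ) ^ (r - 1) = ((b : ℂ) ^ r - (a : ℂ) ^ r) / r := by
  rw [integral_Icc_eq_integral_Ioc, ← intervalIntegral.integral_of_le hab,
    integral_cpow (Or.inr ⟨by simpa [sub_eq_iff_eq_add] using hr, ?_⟩), sub_add_cancel]
  rw [Set.uIcc_of_le hab]
  exact fun h => ha.not_ge h.1

lemma sum_inv_prod_sub_eq_zero {F ι : Type*} [Field F] [DecidableEq ι] {s : Finset ι}
    {v : ι → F} (hv : Set.InjOn v s) (hs : 2 ≤ #s) :
    ∑ i ∈ s, (∏ j ∈ s.erase i, (v j - v i))⁻¹ = 0 := by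
  have h := Lagrange.coeff_eq_sum (neg_injective.comp_injOn hv) (P := 1)
    (by rw [Polynomial.degree_one]; exact_mod_cast (by omega : 0 < #s))
  rw [Polynomial.coeff_one, if_neg (by omega)] at h
  simpa [neg_add_eq_sub] using h.symm

noncomputable def simplexClosedForm (z : ℕ → ℂ) (n : ℕ) (t x : ℝ) : ℂ :=
  ∑ k ∈ range (n + 1),
    (x : ℂ) ^ (z n - z k) * (t : ℂ) ^ z k / ∏ i ∈ (range (n + 1)).erase k, (z i - z k)

lemma prod_erase_range_succ {M : Type*} [CommMonoid M] (g : ℕ → M) {n k : ℕ} (hk : k ≤ n) :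
    ∏ i ∈ (range (n + 1 + 1)).erase k, g i
      = g (n + 1) * ∏ i ∈ (range (n + 1)).erase k, g i := by
  rw [range_add_one, erase_insert_of_ne (by omega), prod_insert (by simp)]

lemma prod_erase_range_eq {M : Type*} [CommMonoid M] (g : ℕ → M) {n k : ℕ} (hk : k ≤ n) :
    ∏ i ∈ (range (n + 1)).erase k, g i
      = (∏ i ∈ range k, g i) * ∏ i ∈ Ico (k + 1) (n + 1), g i := by
  have hsplit : (range (n + 1)).erase k = range k ∪ Ico (k + 1) (n + 1) := by
    ext i
    simp only [mem_erase, mem_range, mem_union, mem_Ico]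
    omega
  rw [hsplit, prod_union (disjoint_left.2 fun i hi hi' => by simp at hi hi'; omega)]

lemma simplexClosedForm_succ {z : ℕ → ℂ} {n : ℕ} (hz : Set.InjOn z (range (n + 2))) {t : ℝ}
    (ht : t ≠ 0) (x : ℝ) :
    simplexClosedForm z (n + 1) t x
      = ∑ k ∈ range (n + 1), (t : ℂ) ^ z k / (∏ i ∈ (range (n + 1)).erase k, (z i - z k))
          * (((x : ℂ) ^ (z (n + 1) - z k) - (t : ℂ) ^ (z (n + 1) - z k))
            / (z (n + 1) - z k)) := by
  -- the weight of the node `n + 1` is minus the sum of the other weights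
  have hlag := sum_inv_prod_sub_eq_zero (s := range (n + 1 + 1)) hz (by simp)
  rw [sum_range_succ, add_eq_zero_iff_neg_eq] at hlag
  rw [simplexClosedForm, sum_range_succ _ (n + 1), sub_self, Complex.cpow_zero, one_mul,
    div_eq_mul_inv _ (∏ i ∈ _, _), ← hlag, mul_neg, mul_sum, ← sub_eq_add_neg,
    ← sum_sub_distrib]
  refine sum_congr rfl fun k hk => ?_
  have htpow : (t : ℂ) ^ z (n + 1) = (t : ℂ) ^ z k * (t : ℂ) ^ (z (n + 1) - z k) := by
    rw [← Complex.cpow_add _ _ (by exact_mod_cast ht), add_sub_cancel]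
  rw [prod_erase_range_succ _ (by simpa [Nat.lt_succ_iff] using hk), htpow]
  simp only [div_eq_mul_inv, mul_inv]
  ring

lemma integral_cpow_mul_simplexClosedForm {z : ℕ → ℂ} {n : ℕ}
    (hz : Set.InjOn z (range (n + 2))) {t x : ℝ} (ht : 0 < t) (htx : t ≤ x) :
    ∫ y in Set.Icc t x, (y : ℂ) ^ (z (n + 1) - z n - 1) * simplexClosedForm z n t y
      = simplexClosedForm z (n + 1) t x := by
  set P : ℕ → ℂ := fun k => ∏ i ∈ (range (n + 1)).erase k, (z i - z k)
  have hd : ∀ k ∈ range (n + 1), z (n + 1) - z k ≠ 0 := fun k hk => by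
    have hk := mem_range.1 hk
    exact sub_ne_zero.2 fun h => by
      have := hz (by simp) (by simp; omega) h
      omega
  have hpow : ∀ y ∈ Set.Icc t x, ∀ k,
      (y : ℂ) ^ (z (n + 1) - z n - 1) * (y : ℂ) ^ (z n - z k)
        = (y : ℂ) ^ (z (n + 1) - z k - 1) := fun y hy k => by
    rw [← Complex.cpow_add _ _ (by exact_mod_cast (ht.trans_le hy.1).ne')]
    ring_nf
  have hint : ∀ k ∈ range (n + 1),
      IntegrableOn (fun y : ℝ => (y : ℂ) ^ (z (n + 1) - z k - 1)) (Set.Icc t x) := fun k _ =>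
    ContinuousOn.integrableOn_Icc fun y hy => (Complex.continuousAt_ofReal_cpow_const _ _
      (Or.inr (ht.trans_le hy.1).ne')).continuousWithinAt
  calc ∫ y in Set.Icc t x, (y : ℂ) ^ (z (n + 1) - z n - 1) * simplexClosedForm z n t y
      = ∫ y in Set.Icc t x, ∑ k ∈ range (n + 1),
          (t : ℂ) ^ z k / P k * (y : ℂ) ^ (z (n + 1) - z k - 1) := by
        refine setIntegral_congr_fun measurableSet_Icc fun y hy => ?_
        rw [simplexClosedForm, mul_sum]
        refine sum_congr rfl fun k _ => ?_
        rw [← hpow y hy k]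
        ring
    _ = ∑ k ∈ range (n + 1), (t : ℂ) ^ z k / P k
          * (((x : ℂ) ^ (z (n + 1) - z k) - (t : ℂ) ^ (z (n + 1) - z k))
            / (z (n + 1) - z k)) := by
        rw [integral_finsetSum _ fun k hk => (hint k hk).const_mul _]
        refine sum_congr rfl fun k hk => ?_
        rw [integral_const_mul, integral_Icc_cpow_sub_one ht htx (hd k hk)]
    _ = simplexClosedForm z (n + 1) t x := (simplexClosedForm_succ hz ht.ne' x).symm

def partialSum {M : Type*} [AddCommMonoid M] (s : ℕ → M) (k : ℕ) : M := ∑ j ∈ range k, s j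

lemma partialSum_succ {M : Type*} [AddCommMonoid M] (s : ℕ → M) (k : ℕ) :
    partialSum s (k + 1) = partialSum s k + s k :=
  sum_range_succ s k

lemma sum_Icc_eq_partialSum_sub {G : Type*} [AddCommGroup G] (s : ℕ → G) {i j : ℕ}
    (h : i ≤ j + 1) :
    ∑ l ∈ Icc i j, s l = partialSum s (j + 1) - partialSum s i := by
  rw [← Ico_add_one_right_eq_Icc, sum_Ico_eq_sub _ h, partialSum, partialSum]

lemma injOn_partialSum {G : Type*} [AddCommGroup G] {s : ℕ → G} {n : ℕ}
    (hs : ∀ i j : ℕ, i ≤ j → j < n → ∑ l ∈ Icc i j, s l ≠ 0) :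
    Set.InjOn (partialSum s) (range (n + 1)) := by
  have key : ∀ a b, a < b → b ≤ n → partialSum s a ≠ partialSum s b := fun a b hab hb h => by
    have := hs a (b - 1) (by omega) (by omega)
    rw [sum_Icc_eq_partialSum_sub s (by omega), Nat.sub_add_cancel (by omega), h,
      sub_self] at this
    exact this rfl
  intro a ha b hb h
  simp only [coe_range, Set.mem_Iio] at ha hb
  by_contra hne
  rcases Nat.lt_or_gt_of_ne hne with hab | hab
  · exact key a b hab (by omega) h
  · exact key b a hab (by omega) h.symm

theorem setIntegral_simplex_prod_cpow (s : ℕ → ℂ) {n : ℕ}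
    (hs : Set.InjOn (partialSum s) (range (n + 1))) {t t' : ℝ} (ht : 0 < t) (htt' : t ≤ t') :
    ∫ u in simplex n t t', ∏ i : Fin n, (u i : ℂ) ^ (s i - 1)
      = simplexClosedForm (partialSum s) n t t' := by
  induction n generalizing t' with
  | zero =>
    have huniv : simplex 0 t t' = Set.univ := by ext u; simp [simplex]
    rw [huniv, Measure.volume_pi_eq_dirac]
    simp [simplexClosedForm, partialSum]
  | succ n ih =>
    rw [setIntegral_simplex_succ (integrableOn_prod_cpow_simplex _ ht)]
    calc ∫ x in Set.Icc t t', ∫ y in simplex n t x,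
          ∏ i, ((Fin.snoc y x : Fin (n + 1) → ℝ) i : ℂ) ^ (s i - 1)
        = ∫ x in Set.Icc t t', (x : ℂ) ^ (partialSum s (n + 1) - partialSum s n - 1)
            * simplexClosedForm (partialSum s) n t x := by
          refine setIntegral_congr_fun measurableSet_Icc fun x hx => ?_
          simp only [prod_snoc_cpow, Fin.val_castSucc, Fin.val_last, integral_mul_const]
          rw [ih (hs.mono (by simp)) hx.1, partialSum_succ, add_sub_cancel_left,
            mul_comm]
      _ = simplexClosedForm (partialSum s) (n + 1) t t' :=
          integral_cpow_mul_simplexClosedForm hs ht htt'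

lemma sum_range_eq_simplexClosedForm (s : ℕ → ℂ) (n : ℕ) (t t' : ℝ) :
    ∑ k ∈ Finset.range (n + 1),
        (-1 : ℂ) ^ k *
          ((t' : ℂ) ^ (∑ j ∈ Finset.Ico k n, s j) /
            ∏ j ∈ Finset.Ico k n, ∑ l ∈ Finset.Icc k j, s l) *
          ((t : ℂ) ^ (∑ j ∈ Finset.range k, s j) /
            ∏ j ∈ Finset.range k, ∑ l ∈ Finset.Icc j (k - 1), s l)
      = simplexClosedForm (partialSum s) n t t' := by
  refine sum_congr rfl fun k hk => ?_
  have hk : k ≤ n := Nat.lt_succ_iff.1 (mem_range.1 hk)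
  let z := partialSum s
  have hupper : ∏ j ∈ Ico k n, ∑ l ∈ Icc k j, s l = ∏ i ∈ Ico (k + 1) (n + 1), (z i - z k) := by
    rw [← prod_Ico_add' (fun i => z i - z k)]
    exact prod_congr rfl fun j hj => sum_Icc_eq_partialSum_sub s (by simp at hj; omega)
  have hlower : ∏ j ∈ range k, ∑ l ∈ Icc j (k - 1), s l
      = (-1) ^ k * ∏ j ∈ range k, (z j - z k) := by
    have hneg := prod_neg (s := range k) fun j => z j - z k
    rw [card_range] at hneg
    rw [← hneg]
    refine prod_congr rfl fun j hj => ?_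
    have hj := mem_range.1 hj
    rw [sum_Icc_eq_partialSum_sub s (by omega), Nat.sub_add_cancel (by omega), neg_sub]
  have hunit : ((-1 : ℂ) ^ k) * ((-1 : ℂ) ^ k)⁻¹ = 1 :=
    mul_inv_cancel₀ (pow_ne_zero _ (neg_ne_zero.2 one_ne_zero))
  rw [sum_Ico_eq_sub _ hk, hupper, hlower, prod_erase_range_eq _ hk]
  change (-1) ^ k * ((t' : ℂ) ^ (z n - z k) / _) * ((t : ℂ) ^ z k / _) = _
  simp only [div_eq_mul_inv, mul_inv]
  linear_combination ((t' : ℂ) ^ (z n - z k) * (t : ℂ) ^ z k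
    * (∏ i ∈ Ico (k + 1) (n + 1), (z i - z k))⁻¹ * (∏ j ∈ range k, (z j - z k))⁻¹) * hunit

theorem stmt15_general (n : ℕ) (t t' : ℝ) (ht : 0 < t) (htt' : t ≤ t')
    (s : ℕ → ℂ) (hs : ∀ i j : ℕ, i ≤ j → j < n → (∑ l ∈ Finset.Icc i j, s l) ≠ 0) :
    (∫ u in simplex n t t', ∏ i : Fin n, (u i : ℂ) ^ (s i.1 - 1)) =
      ∑ k ∈ Finset.range (n + 1),
        (-1 : ℂ) ^ k *
          ((t' : ℂ) ^ (∑ j ∈ Finset.Ico k n, s j) /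
            ∏ j ∈ Finset.Ico k n, ∑ l ∈ Finset.Icc k j, s l) *
          ((t : ℂ) ^ (∑ j ∈ Finset.range k, s j) /
            ∏ j ∈ Finset.range k, ∑ l ∈ Finset.Icc j (k - 1), s l) := by
  rw [setIntegral_simplex_prod_cpow s (injOn_partialSum hs) ht htt',
    sum_range_eq_simplexClosedForm]

/-- For `0 < t ≤ t'` and `s₁,…,sₙ ∈ ℂ` with all partial sums `s_i + ⋯ + s_j` nonzero,
`∫_{t ≤ t₁ ≤ ⋯ ≤ tₙ ≤ t'} t₁^{s₁−1} ⋯ tₙ^{sₙ−1} dt = Σ_{k=0}^{n} (−1)^k ·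
(t')^{s_{k+1}+⋯+sₙ}/(s_{k+1}(s_{k+1}+s_{k+2})⋯(s_{k+1}+⋯+sₙ)) ·
t^{s₁+⋯+s_k}/(s_k(s_k+s_{k−1})⋯(s_k+⋯+s₁))`
(indices `1`-based in the informal formula, `0`-based below). -/
theorem stmt15 (n : ℕ) (hn : 0 < n) (t t' : ℝ) (ht : 0 < t) (htt' : t ≤ t')
    (s : ℕ → ℂ) (hs : ∀ i j : ℕ, i ≤ j → j < n → (∑ l ∈ Finset.Icc i j, s l) ≠ 0) :
    (∫ u in simplex n t t', ∏ i : Fin n, (u i : ℂ) ^ (s i.1 - 1)) =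
      ∑ k ∈ Finset.range (n + 1),
        (-1 : ℂ) ^ k *
          ((t' : ℂ) ^ (∑ j ∈ Finset.Ico k n, s j) /
            ∏ j ∈ Finset.Ico k n, ∑ l ∈ Finset.Icc k j, s l) *
          ((t : ℂ) ^ (∑ j ∈ Finset.range k, s j) /
            ∏ j ∈ Finset.range k, ∑ l ∈ Finset.Icc j (k - 1), s l) :=
  stmt15_general n t t' ht htt' s hs

end Stmt15
end

section
/- Let f₁, …, fₙ : [t₀, ∞) → ℂ be continuous functions and s₁, …, sₙ ∈ ℂ such that each iterated integral F^{f_{i},…,f_{j}}(s_i,…,s_j) := ∫_{t₀ ≤ t_i ≤ ⋯ ≤ t_j < ∞} f_i(t_i) t_i^{s_i−1} ⋯ f_j(t_j) t_j^{s_j−1} dt_i⋯dt_j converges absolutely. Then for 1 ≤ p < n: F^{f₁,…,f_p}(s₁,…,s_p) · F^{f_{p+1},…,fₙ}(s_{p+1},…,sₙ) = Σ_{σ} F^{f_{σ(1)},…,f_{σ(n)}}(s_{σ(1)},…,s_{σ(n)}), where σ ranges over the (p, n−p)-shuffles, i.e., permutations of {1,…,n} such that σ⁻¹ is increasing on {1,…,p}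 and on {p+1,…,n}. -/
open MeasureTheory

namespace Stmt16

/-- The simplex `{t₀ ≤ u₁ ≤ ⋯ ≤ u_m < ∞}` in `ℝᵐ`. -/
def simplex (m : ℕ) (t₀ : ℝ) : Set (Fin m → ℝ) :=
  {u | (∀ i j : Fin m, i ≤ j → u i ≤ u j) ∧ ∀ i, t₀ ≤ u i}

/-- The integrand of the iterated Mellin integral attached to the selection
`ι : Fin m → Fin n` of the functions `f` and exponents `s`. -/
noncomputable def integrand {n m : ℕ} (f : Fin n → ℝ → ℂ) (s : Fin n → ℂ)
    (ι : Fin m → Fin n) (u : Fin m → ℝ) : ℂ :=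
  ∏ i : Fin m, f (ι i) (u i) * (u i : ℂ) ^ (s (ι i) - 1)

/-- The iterated integral `F^{f_{ι(1)},…,f_{ι(m)}}(s_{ι(1)},…,s_{ι(m)})` over the
simplex `{t₀ ≤ u₁ ≤ ⋯ ≤ u_m < ∞}`. -/
noncomputable def Fint {n : ℕ} (t₀ : ℝ) (f : Fin n → ℝ → ℂ) (s : Fin n → ℂ)
    {m : ℕ} (ι : Fin m → Fin n) : ℂ :=
  ∫ u in simplex m t₀, integrand f s ι u

/-- `σ` is a `(p, n−p)`-shuffle: `σ⁻¹` is increasing on `{0,…,p−1}` and on `{p,…,n−1}`. -/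
def IsShuffle {n : ℕ} (p : ℕ) (σ : Equiv.Perm (Fin n)) : Prop :=
  (∀ a b : Fin n, a.1 < p → b.1 < p → a ≤ b → σ⁻¹ a ≤ σ⁻¹ b) ∧
  (∀ a b : Fin n, p ≤ a.1 → p ≤ b.1 → a ≤ b → σ⁻¹ a ≤ σ⁻¹ b)

/-!
Both sides are integrals of `∏ᵢ fᵢ(uᵢ) uᵢ^(sᵢ-1)` over regions of `ℝⁿ`. Splitting the coordinates
into the blocks `{0,…,p-1}` and `{p,…,n-1}` is measure preserving, so by Fubini the product of
the two iterated integrals is the integral over the set `B` of points whose coordinates are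
ordered within each block. Away from the null set of points with two equal coordinates, a point
of `B` is ordered by exactly one permutation, the one sorting it, and that permutation is a
shuffle; conversely every shuffled simplex lies in `B`. Hence the integral over `B` is the sum of
the integrals over the shuffled simplices, and reordering the coordinates identifies each of
these with a shuffled iterated integral.
-/

open Function Equiv

section

lemma measurableSet_simplex (m : ℕ) (t₀ : ℝ) : MeasurableSet (simplex m t₀) := by
  unfold simplex
  measurability

lemma comp_mem_simplex {k m : ℕ} {t₀ : ℝ} {u : Fin m → ℝ} (hu : u ∈ simplex m t₀)
    {g : Fin k → Fin m} (hg : Monotone g) : u ∘ g ∈ simplex k t₀ :=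
  ⟨fun _ _ hij => hu.1 _ _ (hg hij), fun _ => hu.2 _⟩

def precomp {α β : Type*} (e : α ≃ β) : (β → ℝ) ≃ᵐ (α → ℝ) :=
  MeasurableEquiv.arrowCongr' e.symm (.refl ℝ)

lemma measurePreserving_precomp {α β : Type*} [Fintype α] [Fintype β] (e : α ≃ β) :
    MeasurePreserving (precomp e) :=
  volume_preserving_arrowCongr' _ _ (.id volume)

variable {n : ℕ} (t₀ : ℝ) (f : Fin n → ℝ → ℂ) (s : Fin n → ℂ)

lemma integrand_comp_equiv {k m : ℕ} (ι : Fin m → Fin n) (e : Fin k ≃ Fin m) (u : Fin m → ℝ) :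
    integrand f s (ι ∘ e) (u ∘ e) = integrand f s ι u :=
  e.prod_comp fun i => f (ι i) (u i) * (u i : ℂ) ^ (s (ι i) - 1)

lemma integrand_eq_mul {p q m : ℕ} (ι : Fin m → Fin n) (e : Fin p ⊕ Fin q ≃ Fin m)
    (u : Fin m → ℝ) :
    integrand f s ι u =
      integrand f s (ι ∘ e ∘ Sum.inl) (u ∘ e ∘ Sum.inl) *
        integrand f s (ι ∘ e ∘ Sum.inr) (u ∘ e ∘ Sum.inr) := by
  unfold integrand
  rw [← e.prod_comp, Fintype.prod_sum_type]
  rfl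

lemma integrableOn_integrand_of_eq {m m' : ℕ} (h : m = m') {ι : Fin m → Fin n}
    {ι' : Fin m' → Fin n} (hι : ∀ k : Fin m, (ι k).1 = (ι' (Fin.cast h k)).1)
    (hint : IntegrableOn (integrand f s ι) (simplex m t₀)) :
    IntegrableOn (integrand f s ι') (simplex m' t₀) := by
  subst h
  obtain rfl : ι = ι' := funext fun k => Fin.ext (hι k)
  exact hint

def permSimplex (σ : Perm (Fin n)) : Set (Fin n → ℝ) := {u | u ∘ σ ∈ simplex n t₀}

lemma measurableSet_permSimplex (σ : Perm (Fin n)) : MeasurableSet (permSimplex t₀ σ) :=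
  (precomp σ).measurable (measurableSet_simplex n t₀)

lemma Fint_perm (σ : Perm (Fin n)) :
    Fint t₀ f s σ = ∫ u in permSimplex t₀ σ, integrand f s id u := by
  rw [Fint, ← (measurePreserving_precomp σ).setIntegral_preimage_emb
    (precomp σ).measurableEmbedding]
  congr 1 with u
  exact integrand_comp_equiv f s id σ u

lemma ae_injective : ∀ᵐ u : Fin n → ℝ, Injective u := by
  have hdiag : ∀ i j : Fin n, ∀ᵐ u : Fin n → ℝ, u i = u j → i = j := by
    intro i j
    by_cases hij : i = j
    · exact .of_forall fun _ _ => hij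
    set L : (Fin n → ℝ) →ₗ[ℝ] ℝ :=
      LinearMap.proj (R := ℝ) (φ := fun _ => ℝ) i - LinearMap.proj j
    have hL : LinearMap.ker L ≠ ⊤ := fun h => by
      simpa [L, Pi.single_apply, Ne.symm hij] using
        LinearMap.congr_fun (LinearMap.ker_eq_top.1 h) (Pi.single i 1)
    refine measure_mono_null (fun u hu => ?_) (Measure.addHaar_submodule volume _ hL)
    have huij : u i = u j := by simpa [hij] using hu
    simp [L, huij]
  filter_upwards [ae_all_iff.2 fun i => ae_all_iff.2 (hdiag i)] with u hu i j using hu i j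

lemma sort_mem_permSimplex {u : Fin n → ℝ} (hu : ∀ i, t₀ ≤ u i) :
    u ∈ permSimplex t₀ (Tuple.sort u) :=
  ⟨fun _ _ hij => Tuple.monotone_sort u hij, fun _ => hu _⟩

lemma eq_of_mem_permSimplex {u : Fin n → ℝ} (hu : Injective u) {σ τ : Perm (Fin n)}
    (hσ : u ∈ permSimplex t₀ σ) (hτ : u ∈ permSimplex t₀ τ) : σ = τ :=
  Equiv.coe_fn_injective (hu.comp_left (Tuple.unique_monotone hσ.1 hτ.1))

theorem setIntegral_eq_sum_setIntegral_permSimplex {E : Type*} [NormedAddCommGroup E]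
    [NormedSpace ℝ E] {P : Set (Fin n → ℝ)} (Φ : Finset (Perm (Fin n)))
    (hsub : ∀ σ ∈ Φ, permSimplex t₀ σ ⊆ P)
    (hcover : ∀ u ∈ P, Injective u → ∃ σ ∈ Φ, u ∈ permSimplex t₀ σ)
    {F : (Fin n → ℝ) → E} (hF : IntegrableOn F P) :
    ∫ u in P, F u = ∑ σ ∈ Φ, ∫ u in permSimplex t₀ σ, F u := by
  have hP : P =ᵐ[volume] ⋃ σ : Φ, permSimplex t₀ σ := by
    refine Filter.eventuallyEq_set.2
      (ae_injective.mono fun u hu => ⟨fun huP => ?_, fun hu' => ?_⟩)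
    · obtain ⟨σ, hσ, huσ⟩ := hcover u huP hu
      exact Set.mem_iUnion.2 ⟨⟨σ, hσ⟩, huσ⟩
    · obtain ⟨σ, huσ⟩ := Set.mem_iUnion.1 hu'
      exact hsub σ σ.2 huσ
  rw [setIntegral_congr_set hP, integral_iUnion_ae, tsum_fintype]
  · exact Finset.sum_coe_sort Φ fun σ => ∫ u in permSimplex t₀ σ, F u
  · intro σ
    exact (measurableSet_permSimplex t₀ σ.1).nullMeasurableSet
  · refine fun σ τ hστ => measure_mono_null ?_ (ae_iff.1 ae_injective)
    rintro u ⟨huσ, huτ⟩ hu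
    exact hστ (Subtype.ext (eq_of_mem_permSimplex t₀ hu huσ huτ))
  · exact hF.mono_set (Set.iUnion_subset fun σ => hsub σ σ.2)

variable {p q : ℕ} (e : Fin p ⊕ Fin q ≃ Fin n)

/-- The domain of the product of the iterated integrals over the blocks `e ∘ inl`, `e ∘ inr`. -/
def blockSimplex : Set (Fin n → ℝ) :=
  {u | u ∘ e ∘ Sum.inl ∈ simplex p t₀ ∧ u ∘ e ∘ Sum.inr ∈ simplex q t₀}

lemma le_of_mem_blockSimplex {u : Fin n → ℝ} (hu : u ∈ blockSimplex t₀ e) (i : Fin n) :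
    t₀ ≤ u i := by
  obtain ⟨j | j, rfl⟩ := e.surjective i
  exacts [hu.1.2 j, hu.2.2 j]

def splitAlong : (Fin n → ℝ) ≃ᵐ (Fin p → ℝ) × (Fin q → ℝ) :=
  (precomp e).trans (MeasurableEquiv.sumPiEquivProdPi fun _ => ℝ)

lemma measurePreserving_splitAlong : MeasurePreserving (splitAlong e) :=
  (volume_measurePreserving_sumPiEquivProdPi _).comp (measurePreserving_precomp e)

lemma blockSimplex_eq_preimage :
    blockSimplex t₀ e = splitAlong e ⁻¹' simplex p t₀ ×ˢ simplex q t₀ := rfl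

lemma integrand_eq_splitAlong (u : Fin n → ℝ) :
    integrand f s id u =
      integrand f s (e ∘ Sum.inl) (splitAlong e u).1 *
        integrand f s (e ∘ Sum.inr) (splitAlong e u).2 :=
  integrand_eq_mul f s id e u

lemma Fint_mul_Fint :
    Fint t₀ f s (e ∘ Sum.inl) * Fint t₀ f s (e ∘ Sum.inr) =
      ∫ u in blockSimplex t₀ e, integrand f s id u := by
  rw [Fint, Fint, ← setIntegral_prod_mul, ← Measure.volume_eq_prod, blockSimplex_eq_preimage,
    ← (measurePreserving_splitAlong e).setIntegral_preimage_emb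
      (splitAlong e).measurableEmbedding]
  simp_rw [integrand_eq_splitAlong f s e]

lemma integrableOn_blockSimplex
    (h₁ : IntegrableOn (integrand f s (e ∘ Sum.inl)) (simplex p t₀))
    (h₂ : IntegrableOn (integrand f s (e ∘ Sum.inr)) (simplex q t₀)) :
    IntegrableOn (integrand f s id) (blockSimplex t₀ e) := by
  have hprod : IntegrableOn (fun z : (Fin p → ℝ) × (Fin q → ℝ) =>
      integrand f s (e ∘ Sum.inl) z.1 * integrand f s (e ∘ Sum.inr) z.2)
      (simplex p t₀ ×ˢ simplex q t₀) := by
    rw [IntegrableOn, Measure.volume_eq_prod, ← Measure.prod_restrict]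
    exact h₁.mul_prod h₂
  rw [blockSimplex_eq_preimage, funext (integrand_eq_splitAlong f s e)]
  exact ((measurePreserving_splitAlong e).integrableOn_comp_preimage
    (splitAlong e).measurableEmbedding).mpr hprod

/-- `σ` interleaves the blocks `e ∘ inl` and `e ∘ inr`, keeping the order within each. -/
def IsShuffleAlong (σ : Perm (Fin n)) : Prop :=
  Monotone (σ.symm ∘ e ∘ Sum.inl) ∧ Monotone (σ.symm ∘ e ∘ Sum.inr)

lemma permSimplex_subset_blockSimplex {σ : Perm (Fin n)} (hσ : IsShuffleAlong e σ) :
    permSimplex t₀ σ ⊆ blockSimplex t₀ e := by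
  intro u hu
  have hcomp : ∀ {k : ℕ} (g : Fin k → Fin n), u ∘ g = (u ∘ σ) ∘ (σ.symm ∘ g) := fun g => by
    ext; simp
  exact ⟨hcomp (e ∘ Sum.inl) ▸ comp_mem_simplex hu hσ.1,
    hcomp (e ∘ Sum.inr) ▸ comp_mem_simplex hu hσ.2⟩

lemma monotone_symm_comp_of_mem_permSimplex {α : Type*} [Preorder α] {u : Fin n → ℝ}
    (hu : Injective u) {σ : Perm (Fin n)} (hσ : u ∈ permSimplex t₀ σ) {g : α → Fin n}
    (hg : Monotone (u ∘ g)) : Monotone (σ.symm ∘ g) := fun a b hab =>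
  ((Monotone.strictMono_of_injective hσ.1 (hu.comp σ.injective)).le_iff_le).1
    (by simpa using hg hab)

lemma isShuffleAlong_of_mem {u : Fin n → ℝ} (hu : Injective u) (huB : u ∈ blockSimplex t₀ e)
    {σ : Perm (Fin n)} (hσ : u ∈ permSimplex t₀ σ) : IsShuffleAlong e σ :=
  ⟨monotone_symm_comp_of_mem_permSimplex t₀ hu hσ huB.1.1,
    monotone_symm_comp_of_mem_permSimplex t₀ hu hσ huB.2.1⟩

open Classical in
theorem Fint_mul_Fint_eq_sum_shuffles
    (h₁ : IntegrableOn (integrand f s (e ∘ Sum.inl)) (simplex p t₀))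
    (h₂ : IntegrableOn (integrand f s (e ∘ Sum.inr)) (simplex q t₀)) :
    Fint t₀ f s (e ∘ Sum.inl) * Fint t₀ f s (e ∘ Sum.inr) =
      ∑ σ ∈ Finset.univ.filter (IsShuffleAlong e), Fint t₀ f s σ := by
  rw [Fint_mul_Fint, setIntegral_eq_sum_setIntegral_permSimplex t₀ _
    (fun σ hσ => permSimplex_subset_blockSimplex t₀ e (Finset.mem_filter.1 hσ).2)
    (fun u huB hu =>
      have hsort := sort_mem_permSimplex t₀ (le_of_mem_blockSimplex t₀ e huB)
      ⟨Tuple.sort u, Finset.mem_filter.2 ⟨Finset.mem_univ _,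
        isShuffleAlong_of_mem t₀ e hu huB hsort⟩, hsort⟩)
    (integrableOn_blockSimplex t₀ f s e h₁ h₂)]
  exact Finset.sum_congr rfl fun σ _ => (Fint_perm t₀ f s σ).symm

lemma isShuffle_iff_isShuffleAlong (h : p + q = n) (σ : Perm (Fin n)) :
    IsShuffle p σ ↔ IsShuffleAlong (finSumFinEquiv.trans (finCongr h)) σ := by
  set e := finSumFinEquiv.trans (finCongr h)
  have hr : ∀ (a : Fin n) (ha : p ≤ a.1), e (.inr ⟨a.1 - p, by omega⟩) = a := fun _ ha =>
    Fin.ext (Nat.add_sub_cancel' ha)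
  constructor
  · rintro ⟨hσl, hσr⟩
    exact ⟨fun i j hij => hσl (e (.inl i)) (e (.inl j)) i.2 j.2 hij,
      fun i j hij => hσr (e (.inr i)) (e (.inr j)) (Nat.le_add_right p i) (Nat.le_add_right p j)
        (Nat.add_le_add_left hij p)⟩
  · rintro ⟨hσl, hσr⟩
    refine ⟨fun a b ha hb hab => ?_, fun a b ha hb hab => ?_⟩
    · exact hσl (show (⟨a.1, ha⟩ : Fin p) ≤ ⟨b.1, hb⟩ from hab)
    · have := hσr (show (⟨a.1 - p, by omega⟩ : Fin q) ≤ ⟨b.1 - p, by omega⟩ from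
        Nat.sub_le_sub_right hab p)
      simp only [comp_apply, hr a ha, hr b hb] at this
      exact this

end

open Classical in
/-- Shuffle relation for iterated Mellin-type integrals: if all the iterated
integrals `F^{f_i,…,f_j}(s_i,…,s_j)` (for `i ≤ j`, consecutive blocks) converge
absolutely, then
`F^{f₁,…,f_p}(s₁,…,s_p) · F^{f_{p+1},…,fₙ}(s_{p+1},…,sₙ)
  = Σ_{σ (p,n−p)-shuffle} F^{f_{σ(1)},…,f_{σ(n)}}(s_{σ(1)},…,s_{σ(n)})`. -/
theorem stmt16 (n p : ℕ) (hp : 1 ≤ p) (hpn : p < n) (t₀ : ℝ)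
    (f : Fin n → ℝ → ℂ) (s : Fin n → ℂ)
    (hconv : ∀ i j : Fin n, (hij : i ≤ j) →
      IntegrableOn
        (integrand f s (fun k : Fin (j.1 - i.1 + 1) =>
          (⟨i.1 + k.1, by
            have h1 := k.isLt; have h2 := j.isLt; have h3 := Fin.le_def.mp hij
            omega⟩ : Fin n)))
        (simplex (j.1 - i.1 + 1) t₀) volume) :
    Fint t₀ f s (fun k : Fin p => (⟨k.1, by have := k.isLt; omega⟩ : Fin n)) *
      Fint t₀ f s (fun k : Fin (n - p) => (⟨p + k.1, by have := k.isLt; omega⟩ : Fin n)) =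
    ∑ σ : Equiv.Perm (Fin n),
      if IsShuffle p σ then Fint t₀ f s (fun i => σ i) else 0 := by
  have hn : p + (n - p) = n := Nat.add_sub_cancel' hpn.le
  set e := finSumFinEquiv.trans (finCongr hn)
  have h₁ := integrableOn_integrand_of_eq t₀ f s (show p - 1 - 0 + 1 = p by omega)
    (ι' := e ∘ Sum.inl) (fun k => Nat.zero_add k.1)
    (hconv ⟨0, by omega⟩ ⟨p - 1, by omega⟩ (Fin.mk_le_mk.2 (Nat.zero_le _)))
  have h₂ := integrableOn_integrand_of_eq t₀ f s (show n - 1 - p + 1 = n - p by omega)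
    (ι' := e ∘ Sum.inr) (fun _ => rfl)
    (hconv ⟨p, hpn⟩ ⟨n - 1, by omega⟩ (Fin.mk_le_mk.2 (by omega)))
  calc _ = Fint t₀ f s (e ∘ Sum.inl) * Fint t₀ f s (e ∘ Sum.inr) := rfl
    _ = _ := Fint_mul_Fint_eq_sum_shuffles t₀ f s e h₁ h₂
    _ = _ := by
      rw [Finset.sum_filter]
      exact Finset.sum_congr rfl fun σ _ => by rw [isShuffle_iff_isShuffleAlong hn]

end Stmt16
end

section
/- Let f₁, …, fₙ : (0, ∞) → ℂ be continuous, s₁, …, sₙ ∈ ℂ, and suppose that for every k and every t₀ > 0 the integrals G_{t₀}^{f₁,…,f_k}(s₁,…,s_k) := ∫_{0 ≤ t₁ ≤ ⋯ ≤ t_k ≤ t₀} ∏ f_i(t_i) t_i^{s_i−1} dt_i and F_{t₀}^{f_{k+1},…,fₙ}(s_{k+1},…,sₙ) := ∫_{t₀ ≤ t_{k+1} ≤ ⋯ ≤ tₙ < ∞} ∏ f_i(t_i) t_i^{s_i−1} dt_i converge absolutely and depend differentiably on t₀. Then the function t₀ ↦ Σ_{k=0}^{n} G_{t₀}^{f₁,…,f_k}(s₁,…,s_k)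 · F_{t₀}^{f_{k+1},…,fₙ}(s_{k+1},…,sₙ) is constant on (0, ∞). -/
open MeasureTheory

namespace Stmt17

/-- The upper simplex `{t₀ ≤ u₁ ≤ ⋯ ≤ u_m < ∞}` in `ℝᵐ`. -/
def simplexUpper (m : ℕ) (t₀ : ℝ) : Set (Fin m → ℝ) :=
  {u | (∀ i j : Fin m, i ≤ j → u i ≤ u j) ∧ ∀ i, t₀ ≤ u i}

/-- The lower simplex `{0 ≤ u₁ ≤ ⋯ ≤ u_m ≤ t₀}` in `ℝᵐ`. -/
def simplexLower (m : ℕ) (t₀ : ℝ) : Set (Fin m → ℝ) :=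
  {u | (∀ i j : Fin m, i ≤ j → u i ≤ u j) ∧ ∀ i, 0 ≤ u i ∧ u i ≤ t₀}

/-- The integrand `∏ᵢ f_{ι(i)}(uᵢ) uᵢ^{s_{ι(i)}−1}` attached to a selection
`ι : Fin m → Fin n`. -/
noncomputable def integrand {n m : ℕ} (f : Fin n → ℝ → ℂ) (s : Fin n → ℂ)
    (ι : Fin m → Fin n) (u : Fin m → ℝ) : ℂ :=
  ∏ i : Fin m, f (ι i) (u i) * (u i : ℂ) ^ (s (ι i) - 1)

/-- The selection of the first `k` indices `(f₁,…,f_k)`. -/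
def ιlow {n : ℕ} (k : Fin (n + 1)) : Fin k.1 → Fin n :=
  fun j => ⟨j.1, by have := j.isLt; have := k.isLt; omega⟩

/-- The selection of the last `n − k` indices `(f_{k+1},…,fₙ)`. -/
def ιhigh {n : ℕ} (k : Fin (n + 1)) : Fin (n - k.1) → Fin n :=
  fun j => ⟨k.1 + j.1, by have := j.isLt; have := k.isLt; omega⟩

/-- `G_{t₀}^{f₁,…,f_k}(s₁,…,s_k)`, the iterated integral over `{0 ≤ t₁ ≤ ⋯ ≤ t_k ≤ t₀}`. -/
noncomputable def G {n : ℕ} (f : Fin n → ℝ → ℂ) (s : Fin n → ℂ) (k : Fin (n + 1))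
    (t₀ : ℝ) : ℂ :=
  ∫ u in simplexLower k.1 t₀, integrand f s (ιlow k) u

/-- `F_{t₀}^{f_{k+1},…,fₙ}(s_{k+1},…,sₙ)`, the iterated integral over
`{t₀ ≤ t_{k+1} ≤ ⋯ ≤ tₙ < ∞}`. -/
noncomputable def F {n : ℕ} (f : Fin n → ℝ → ℂ) (s : Fin n → ℂ) (k : Fin (n + 1))
    (t₀ : ℝ) : ℂ :=
  ∫ u in simplexUpper (n - k.1) t₀, integrand f s (ιhigh k) u

/-!
Cutting the simplex `{0 ≤ u₁ ≤ ⋯ ≤ uₙ}` at the position of `t₀` among the coordinates gives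
the pieces `{u₁ ≤ ⋯ ≤ u_k ≤ t₀ ≤ u_{k+1} ≤ ⋯ ≤ uₙ}`, `k = 0, …, n`. Each piece is the product
of a lower simplex of dimension `k` and an upper simplex of dimension `n − k`, on which the
integrand factors, so its integral is `G_{t₀}^{f₁,…,f_k} · F_{t₀}^{f_{k+1},…,fₙ}`. Distinct
pieces meet only in hyperplanes `{u_k = t₀}`, so the sum is the integral over the whole
simplex, which does not depend on `t₀`.
-/

section Split

variable {n : ℕ}

def finSplitEquiv (k : Fin (n + 1)) : Fin k.1 ⊕ Fin (n - k.1) ≃ Fin n :=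
  finSumFinEquiv.trans (finCongr (by have := k.isLt; omega))

lemma finSplitEquiv_inl (k : Fin (n + 1)) (i : Fin k.1) :
    finSplitEquiv k (.inl i) = ιlow k i := by
  simp [finSplitEquiv, ιlow, Fin.ext_iff]

lemma finSplitEquiv_inr (k : Fin (n + 1)) (j : Fin (n - k.1)) :
    finSplitEquiv k (.inr j) = ιhigh k j := by
  simp [finSplitEquiv, ιhigh, Fin.ext_iff]

noncomputable def piSplit (k : Fin (n + 1)) :
    (Fin k.1 → ℝ) × (Fin (n - k.1) → ℝ) ≃ᵐ (Fin n → ℝ) :=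
  (MeasurableEquiv.sumPiEquivProdPi fun _ => ℝ).symm.trans
    (MeasurableEquiv.piCongrLeft (fun _ => ℝ) (finSplitEquiv k))

lemma measurePreserving_piSplit (k : Fin (n + 1)) :
    MeasurePreserving (piSplit k) volume volume :=
  (volume_measurePreserving_piCongrLeft (fun _ => ℝ) (finSplitEquiv k)).comp
    (volume_measurePreserving_sumPiEquivProdPi_symm fun _ => ℝ)

variable (k : Fin (n + 1)) (p : (Fin k.1 → ℝ) × (Fin (n - k.1) → ℝ))

lemma piSplit_apply_ιlow (i : Fin k.1) : piSplit k p (ιlow k i) = p.1 i := by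
  rw [← finSplitEquiv_inl]
  exact Equiv.piCongrLeft_sumInl (fun _ => ℝ) (finSplitEquiv k) p.1 p.2 i

lemma piSplit_apply_ιhigh (j : Fin (n - k.1)) : piSplit k p (ιhigh k j) = p.2 j := by
  rw [← finSplitEquiv_inr]
  exact Equiv.piCongrLeft_sumInr (fun _ => ℝ) (finSplitEquiv k) p.1 p.2 j

lemma piSplit_apply_of_lt (i : Fin n) (h : i.1 < k.1) : piSplit k p i = p.1 ⟨i.1, h⟩ :=
  piSplit_apply_ιlow k p ⟨i.1, h⟩

lemma piSplit_apply_of_le (i : Fin n) (h : k.1 ≤ i.1) :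
    piSplit k p i = p.2 ⟨i.1 - k.1, by omega⟩ := by
  rw [← piSplit_apply_ιhigh]
  exact congrArg _ (Fin.ext (by simp only [ιhigh]; omega))

lemma integrand_piSplit (f : Fin n → ℝ → ℂ) (s : Fin n → ℂ) :
    integrand f s id (piSplit k p) =
      integrand f s (ιlow k) p.1 * integrand f s (ιhigh k) p.2 := by
  rw [integrand, ← (finSplitEquiv k).prod_comp, Fintype.prod_sum_type]
  simp only [id, finSplitEquiv_inl, finSplitEquiv_inr, piSplit_apply_ιlow, piSplit_apply_ιhigh,
    integrand]

end Split

section SimplexCut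

def simplexCut (n : ℕ) (t₀ : ℝ) (k : Fin (n + 1)) : Set (Fin n → ℝ) :=
  {u | (∀ i j : Fin n, i ≤ j → u i ≤ u j) ∧
    ∀ i : Fin n, ((i : ℕ) < k.1 → 0 ≤ u i ∧ u i ≤ t₀) ∧ (k.1 ≤ (i : ℕ) → t₀ ≤ u i)}

variable {n : ℕ}

lemma measurableSet_simplexLower {m : ℕ} {t₀ : ℝ} : MeasurableSet (simplexLower m t₀) := by
  unfold simplexLower; measurability

lemma measurableSet_simplexUpper {m : ℕ} {t₀ : ℝ} : MeasurableSet (simplexUpper m t₀) := by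
  unfold simplexUpper; measurability

lemma measurableSet_simplexCut {t₀ : ℝ} {k : Fin (n + 1)} :
    MeasurableSet (simplexCut n t₀ k) := by
  unfold simplexCut; measurability

lemma piSplit_preimage_simplexCut (k : Fin (n + 1)) (t₀ : ℝ) :
    piSplit k ⁻¹' simplexCut n t₀ k = simplexLower k.1 t₀ ×ˢ simplexUpper (n - k.1) t₀ := by
  ext p
  constructor
  · rintro ⟨hmono, hbound⟩
    refine ⟨⟨fun i j hij => ?_, fun i => ?_⟩, ⟨fun i j hij => ?_, fun i => ?_⟩⟩
    · simpa only [piSplit_apply_ιlow] using hmono (ιlow k i) (ιlow k j) hij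
    · simpa only [piSplit_apply_ιlow] using (hbound (ιlow k i)).1 i.isLt
    · simpa only [piSplit_apply_ιhigh] using
        hmono (ιhigh k i) (ιhigh k j) (Nat.add_le_add_left hij k.1)
    · simpa only [piSplit_apply_ιhigh] using (hbound (ιhigh k i)).2 (Nat.le_add_right k.1 i.1)
  · rintro ⟨⟨hlow_mono, hlow⟩, ⟨hhigh_mono, hhigh⟩⟩
    refine ⟨fun i j hij => ?_, fun i => ⟨fun hi => ?_, fun hi => ?_⟩⟩
    · have hij' : i.1 ≤ j.1 := hij
      rcases lt_or_ge i.1 k.1 with hi | hi <;> rcases lt_or_ge j.1 k.1 with hj | hj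
      · rw [piSplit_apply_of_lt k p i hi, piSplit_apply_of_lt k p j hj]
        exact hlow_mono _ _ hij
      · rw [piSplit_apply_of_lt k p i hi, piSplit_apply_of_le k p j hj]
        exact (hlow _).2.trans (hhigh _)
      · omega
      · rw [piSplit_apply_of_le k p i hi, piSplit_apply_of_le k p j hj]
        exact hhigh_mono _ _ (Fin.mk_le_mk.2 (by omega))
    · rw [piSplit_apply_of_lt k p i hi]
      exact hlow _
    · rw [piSplit_apply_of_le k p i hi]
      exact hhigh _

lemma integrableOn_simplexCut (f : Fin n → ℝ → ℂ) (s : Fin n → ℂ) (k : Fin (n + 1)) (t₀ : ℝ)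
    (hG : IntegrableOn (integrand f s (ιlow k)) (simplexLower k.1 t₀))
    (hF : IntegrableOn (integrand f s (ιhigh k)) (simplexUpper (n - k.1) t₀)) :
    IntegrableOn (integrand f s id) (simplexCut n t₀ k) := by
  rw [← (measurePreserving_piSplit k).integrableOn_comp_preimage
    (piSplit k).measurableEmbedding, piSplit_preimage_simplexCut]
  have hprod : IntegrableOn (fun p => integrand f s (ιlow k) p.1 * integrand f s (ιhigh k) p.2)
      (simplexLower k.1 t₀ ×ˢ simplexUpper (n - k.1) t₀) := by
    rw [IntegrableOn, Measure.volume_eq_prod, ← Measure.prod_restrict]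
    exact hG.mul_prod hF
  exact hprod.congr_fun (fun p _ => (integrand_piSplit k p f s).symm)
    (measurableSet_simplexLower.prod measurableSet_simplexUpper)

lemma setIntegral_simplexCut (f : Fin n → ℝ → ℂ) (s : Fin n → ℂ) (k : Fin (n + 1)) (t₀ : ℝ) :
    ∫ u in simplexCut n t₀ k, integrand f s id u = G f s k t₀ * F f s k t₀ := by
  rw [← (measurePreserving_piSplit k).setIntegral_preimage_emb (piSplit k).measurableEmbedding,
    piSplit_preimage_simplexCut, setIntegral_congr_fun
      (measurableSet_simplexLower.prod measurableSet_simplexUpper)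
      (fun p _ => integrand_piSplit k p f s),
    Measure.volume_eq_prod, setIntegral_prod_mul]
  rfl

lemma iUnion_simplexCut {t₀ : ℝ} (ht₀ : 0 ≤ t₀) :
    ⋃ k : Fin (n + 1), simplexCut n t₀ k = simplexUpper n 0 := by
  refine subset_antisymm (Set.iUnion_subset fun k u ⟨hmono, hbound⟩ => ⟨hmono, fun i => ?_⟩) ?_
  · rcases lt_or_ge i.1 k.1 with hi | hi
    · exact ((hbound i).1 hi).1
    · exact ht₀.trans ((hbound i).2 hi)
  · rintro u ⟨hmono, hnonneg⟩
    -- the piece is indexed by the first position from which on all coordinates exceed `t₀`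
    have hex : ∃ m, ∀ i : Fin n, m ≤ i.1 → t₀ < u i := ⟨n, fun i hi => by omega⟩
    refine Set.mem_iUnion.2 ⟨⟨Nat.find hex, Nat.lt_succ_of_le (Nat.find_min' hex
      fun i hi => by omega)⟩, hmono, fun i => ⟨fun hi => ⟨hnonneg i, ?_⟩,
      fun hi => (Nat.find_spec hex i hi).le⟩⟩
    by_contra! hlt
    exact Nat.find_min hex hi fun j hij => hlt.trans_le (hmono i j hij)

lemma aedisjoint_simplexCut (t₀ : ℝ) :
    Pairwise (Function.onFun (AEDisjoint (volume : Measure (Fin n → ℝ))) (simplexCut n t₀)) := by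
  refine (Std.Symm.pairwise_on _).2 fun k k' hlt => ?_
  have hkn : k.1 < n := by omega
  refine measure_mono_null (fun u hu => ?_)
    (show volume {v : Fin n → ℝ | v ⟨k.1, hkn⟩ = t₀} = 0 by
      rw [volume_pi]; exact Measure.pi_hyperplane _ _ _)
  exact le_antisymm ((hu.2.2 ⟨k.1, hkn⟩).1 hlt).2 ((hu.1.2 ⟨k.1, hkn⟩).2 le_rfl)

end SimplexCut

theorem sum_G_mul_F_eq_setIntegral {n : ℕ} (f : Fin n → ℝ → ℂ) (s : Fin n → ℂ) {t₀ : ℝ}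
    (ht₀ : 0 ≤ t₀)
    (hG : ∀ k : Fin (n + 1), IntegrableOn (integrand f s (ιlow k)) (simplexLower k.1 t₀))
    (hF : ∀ k : Fin (n + 1),
      IntegrableOn (integrand f s (ιhigh k)) (simplexUpper (n - k.1) t₀)) :
    ∑ k : Fin (n + 1), G f s k t₀ * F f s k t₀ = ∫ u in simplexUpper n 0, integrand f s id u := by
  rw [← iUnion_simplexCut ht₀, integral_iUnion_ae
      (fun _ => measurableSet_simplexCut.nullMeasurableSet) (aedisjoint_simplexCut t₀)
      (integrableOn_finite_iUnion.2 fun k => integrableOn_simplexCut f s k t₀ (hG k) (hF k)),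
    tsum_fintype]
  exact Finset.sum_congr rfl fun k _ => (setIntegral_simplexCut f s k t₀).symm

theorem stmt17_general (n : ℕ) (f : Fin n → ℝ → ℂ) (s : Fin n → ℂ)
    (hGconv : ∀ (k : Fin (n + 1)) (t₀ : ℝ), 0 < t₀ →
      IntegrableOn (integrand f s (ιlow k)) (simplexLower k.1 t₀) volume)
    (hFconv : ∀ (k : Fin (n + 1)) (t₀ : ℝ), 0 < t₀ →
      IntegrableOn (integrand f s (ιhigh k)) (simplexUpper (n - k.1) t₀) volume) :
    ∀ t₀ t₁ : ℝ, 0 < t₀ → 0 < t₁ →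
      (∑ k : Fin (n + 1), G f s k t₀ * F f s k t₀) =
      (∑ k : Fin (n + 1), G f s k t₁ * F f s k t₁) := by
  intro t₀ t₁ ht₀ ht₁
  rw [sum_G_mul_F_eq_setIntegral f s ht₀.le (fun k => hGconv k t₀ ht₀) (fun k => hFconv k t₀ ht₀),
    sum_G_mul_F_eq_setIntegral f s ht₁.le (fun k => hGconv k t₁ ht₁) (fun k => hFconv k t₁ ht₁)]

/-- If all the iterated integrals `G_{t₀}^{f₁,…,f_k}` and `F_{t₀}^{f_{k+1},…,fₙ}`
converge absolutely and depend differentiably on `t₀ ∈ (0,∞)`, then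
`t₀ ↦ Σ_{k=0}^{n} G_{t₀}^{f₁,…,f_k} · F_{t₀}^{f_{k+1},…,fₙ}` is constant on `(0,∞)`. -/
theorem stmt17 (n : ℕ) (f : Fin n → ℝ → ℂ) (s : Fin n → ℂ)
    (hf : ∀ i, ContinuousOn (f i) (Set.Ioi (0 : ℝ)))
    (hGconv : ∀ (k : Fin (n + 1)) (t₀ : ℝ), 0 < t₀ →
      IntegrableOn (integrand f s (ιlow k)) (simplexLower k.1 t₀) volume)
    (hFconv : ∀ (k : Fin (n + 1)) (t₀ : ℝ), 0 < t₀ →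
      IntegrableOn (integrand f s (ιhigh k)) (simplexUpper (n - k.1) t₀) volume)
    (hGdiff : ∀ k : Fin (n + 1), DifferentiableOn ℝ (G f s k) (Set.Ioi (0 : ℝ)))
    (hFdiff : ∀ k : Fin (n + 1), DifferentiableOn ℝ (F f s k) (Set.Ioi (0 : ℝ))) :
    ∀ t₀ t₁ : ℝ, 0 < t₀ → 0 < t₁ →
      (∑ k : Fin (n + 1), G f s k t₀ * F f s k t₀) =
      (∑ k : Fin (n + 1), G f s k t₁ * F f s k t₁) :=
  stmt17_general n f s hGconv hFconv

end Stmt17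
end

section
/- For g = [[α, β], [γ, δ]] ∈ SL₂(ℤ) and τ in the upper half plane ℍ, define a_g(τ) := [[γτ + δ, 0], [γ/(2πi), (γτ + δ)⁻¹]] ∈ SL₂(ℂ), where g acts on ℍ by gτ = (ατ + β)/(γτ + δ). Then for all g₁, g₂ ∈ SL₂(ℤ) and τ ∈ ℍ: a_{g₁g₂}(τ) = a_{g₂}(τ) · a_{g₁}(g₂τ). -/
/-!
With `j(g, τ) = γτ + δ`, the diagonal entries are the automorphy-factor cocycle
`j(g₁g₂, τ) = j(g₁, g₂τ) j(g₂, τ)`. The lower-left entry reduces, through `αδ - βγ = 1`, to the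
identity `α = γ · gτ + j(g, τ)⁻¹`.
-/

open Complex UpperHalfPlane Matrix

namespace Stmt19

noncomputable def aMat (g : Matrix.SpecialLinearGroup (Fin 2) ℤ) (τ : UpperHalfPlane) :
    Matrix (Fin 2) (Fin 2) ℂ :=
  !![(g.1 1 0 : ℂ) * (τ : ℂ) + (g.1 1 1 : ℂ), 0;
     (g.1 1 0 : ℂ) / (2 * Real.pi * Complex.I),
       ((g.1 1 0 : ℂ) * (τ : ℂ) + (g.1 1 1 : ℂ))⁻¹]

open MatrixGroups ModularGroup

lemma aMat_eq_denom (g : SL(2, ℤ)) (τ : ℍ) :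
    aMat g τ = !![denom g τ, 0; (g 1 0 : ℂ) / (2 * Real.pi * Complex.I), (denom g τ)⁻¹] := by
  rw [aMat, denom_apply]

lemma denom_mul (g₁ g₂ : SL(2, ℤ)) (τ : ℍ) :
    denom (g₁ * g₂ : SL(2, ℤ)) τ = denom g₁ ↑(g₂ • τ) * denom g₂ τ := by
  rw [sl_moeb, map_mul, map_mul, denom_cocycle _ _ τ.im_ne_zero, ← coe_smul_of_det_pos (by simp)]

lemma apply_zero_zero_eq_smul_add_inv_denom (g : SL(2, ℤ)) (τ : ℍ) :
    (g 0 0 : ℂ) = g 1 0 * ↑(g • τ) + (denom g τ)⁻¹ := by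
  have hdet : (g 0 0 : ℂ) * g 1 1 - g 0 1 * g 1 0 = 1 := by
    have h := g.det_coe
    rw [det_fin_two] at h
    exact_mod_cast h
  have hj := denom_ne_zero g τ
  rw [denom_apply] at hj ⊢
  rw [coe_specialLinearGroup_apply]
  simp only [algebraMap_int_eq, eq_intCast, ofReal_intCast]
  field_simp
  linear_combination hdet

lemma mul_apply_one_zero_eq (g₁ g₂ : SL(2, ℤ)) (τ : ℍ) :
    ((g₁ * g₂) 1 0 : ℂ) = g₂ 1 0 * denom g₁ ↑(g₂ • τ) + g₁ 1 0 * (denom g₂ τ)⁻¹ := by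
  simp only [Matrix.SpecialLinearGroup.coe_mul, two_mul_expl, Int.cast_add, Int.cast_mul]
  rw [apply_zero_zero_eq_smul_add_inv_denom g₂ τ, denom_apply g₁]
  ring

/-- For `g ∈ SL₂(ℤ)` and `τ ∈ ℍ`, the matrix `a_g(τ)` lies in `SL₂(ℂ)`, and the
cocycle relation `a_{g₁g₂}(τ) = a_{g₂}(τ) · a_{g₁}(g₂τ)` holds, where `SL₂(ℤ)` acts
on `ℍ` by Möbius transformations. -/
theorem stmt19 :
    (∀ (g : Matrix.SpecialLinearGroup (Fin 2) ℤ) (τ : UpperHalfPlane),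
      (aMat g τ).det = 1) ∧
    ∀ (g₁ g₂ : Matrix.SpecialLinearGroup (Fin 2) ℤ) (τ : UpperHalfPlane),
      aMat (g₁ * g₂) τ = aMat g₂ τ * aMat g₁ (g₂ • τ) := by
  refine ⟨fun g τ ↦ ?_, fun g₁ g₂ τ ↦ ?_⟩
  · rw [aMat_eq_denom, det_fin_two_of, mul_inv_cancel₀ (denom_ne_zero _ _)]
    ring
  · rw [aMat_eq_denom, aMat_eq_denom, aMat_eq_denom, mul_fin_two, denom_mul, mul_inv,
      mul_apply_one_zero_eq g₁ g₂ τ]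
    congr 1
    ring_nf

end Stmt19
end
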